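/- Let w be an element of S_Z and let T be an increasing tableau of partition shape with at most n rows such that revrow(T) is in R(w). Let RF_n(T) be the set of a = (a^1,...,a^n) in RF_n(w) whose concatenation a^1a^2...a^n is Coxeter–Knuth equivalent to revrow(T). Then the factorization a in which a^i is the reversal of row i of T (and a^i is empty for i greater than the number of rows of T) belongs to RF_n(T), and it is the unique element of RF_n(T) satisfying e_i(a) = 0 for all i in {1,...,n-1}. -/

import Mathlib

open MvPolynomial

/-! ### Permutations of ℤ, reduced words -/

/-- The simple transposition `s_i = (i, i+1)` of `ℤ`. -/
def sT (i : ℤ) : Equiv.Perm ℤ := Equiv.swap i (i + 1)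

/-- The product `s_{i_1} s_{i_2} ⋯ s_{i_l}` of the simple transpositions indexed by a word. -/
def wordProd (l : List ℤ) : Equiv.Perm ℤ := (l.map sT).prod

/-- `S_ℤ`: the subgroup of permutations of `ℤ` generated by the simple transpositions. -/
def SZSet : Set (Equiv.Perm ℤ) := {w | ∃ l : List ℤ, wordProd l = w}

/-- `S_∞`: the subgroup generated by `s_i` for `i ≥ 1`. -/
def SinftySet : Set (Equiv.Perm ℤ) :=
  {w | ∃ l : List ℤ, (∀ i ∈ l, 1 ≤ i) ∧ wordProd l = w}

/-- `S_n`: the subgroup generated by `s_i` for `1 ≤ i ≤ n-1`. -/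
def SnSet (n : ℕ) : Set (Equiv.Perm ℤ) :=
  {w | ∃ l : List ℤ, (∀ i ∈ l, 1 ≤ i ∧ i < n) ∧ wordProd l = w}

/-- A reduced word for `w`: a minimal length word whose product is `w`. -/
def IsReducedWord (w : Equiv.Perm ℤ) (l : List ℤ) : Prop :=
  wordProd l = w ∧ ∀ m : List ℤ, wordProd m = w → l.length ≤ m.length

/-- The Coxeter length of `w` (the length of any reduced word for `w`). -/
noncomputable def lenOf (w : Equiv.Perm ℤ) : ℕ :=
  sInf {m | ∃ l : List ℤ, wordProd l = w ∧ l.length = m}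

/-- The inversion set `Inv(w) = {(a,b) : a < b, w(a) > w(b)}`. -/
def InvSet (w : Equiv.Perm ℤ) : Set (ℤ × ℤ) := {p | p.1 < p.2 ∧ w p.2 < w p.1}

/-- The Lehmer code `c_i(w) = #{j : i < j, w(i) > w(j)}`. -/
noncomputable def codeOf (w : Equiv.Perm ℤ) (i : ℤ) : ℕ := {j : ℤ | i < j ∧ w j < w i}.ncard

/-- The Rothe diagram `D(w) = {(i, w(j)) : i < j, w(i) > w(j)}`. -/
def RotheD (w : Equiv.Perm ℤ) : Set (ℤ × ℤ) :=
  {p | ∃ j : ℤ, p.1 < j ∧ w j < w p.1 ∧ p.2 = w j}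

/-! ### Primed letters and primed words -/

/-- A primed letter: `(x, false)` denotes the integer `x`, `(x, true)` denotes `x' = x - 1/2`. -/
abbrev PLetter := ℤ × Bool

/-- Twice the value of a primed letter (so that comparisons agree with `1' < 1 < 2' < 2 < ⋯`). -/
def pval (p : PLetter) : ℤ := 2 * p.1 - (if p.2 then 1 else 0)

/-- A strictly decreasing primed word. -/
def PDec (l : List PLetter) : Prop := l.Pairwise (fun p q => pval q < pval p)

/-- A strictly decreasing integer word. -/
def ZDec (l : List ℤ) : Prop := l.Pairwise (fun x y => y < x)

/-- Remove the primes from a primed word (the "ceiling"). -/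
def unprimeW (l : List PLetter) : List ℤ := l.map Prod.fst

/-- Membership in `R⁺(w)`: a primed word whose unprimed form is a reduced word for `w`. -/
def IsPrimedReducedWord (w : Equiv.Perm ℤ) (l : List PLetter) : Prop :=
  IsReducedWord w (unprimeW l)

/-- The set `Marked(i)` of marked inversions of a primed word. -/
def markedSet (l : List PLetter) : Set (ℤ × ℤ) :=
  {p | ∃ j : Fin l.length, (l.get j).2 = true ∧
        p.1 = wordProd ((l.drop ((j : ℕ) + 1)).reverse.map Prod.fst) (l.get j).1 ∧
        p.2 = wordProd ((l.drop ((j : ℕ) + 1)).reverse.map Prod.fst) ((l.get j).1 + 1)}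

/-! ### Factorizations (as sequences of factors) -/

/-- The concatenation of the first `N` factors of a factorization. -/
def concatP (a : ℕ → List PLetter) (N : ℕ) : List PLetter := ((List.range N).map a).flatten

/-- The concatenation of the first `N` factors of an unprimed factorization. -/
def concatZ (a : ℕ → List ℤ) (N : ℕ) : List ℤ := ((List.range N).map a).flatten

/-- `RF⁺(w, A)`: decreasing primed reduced factorizations of `w` with marked set `A`
(all but finitely many factors empty). -/
def RFplus (w : Equiv.Perm ℤ) (A : Set (ℤ × ℤ)) : Set (ℕ → List PLetter) :=
  {a | (∀ i, PDec (a i)) ∧ ∃ N : ℕ, (∀ m, N ≤ m → a m = []) ∧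
        IsPrimedReducedWord w (concatP a N) ∧ markedSet (concatP a N) = A}

/-- `RF⁺_n(w, A)`: elements of `RF⁺(w, A)` with all factors beyond the first `n` empty. -/
def RFplusN (n : ℕ) (w : Equiv.Perm ℤ) (A : Set (ℤ × ℤ)) : Set (ℕ → List PLetter) :=
  {a | (∀ i, PDec (a i)) ∧ (∀ m, n ≤ m → a m = []) ∧
        IsPrimedReducedWord w (concatP a n) ∧ markedSet (concatP a n) = A}

/-- `RF_n(w)`: unprimed decreasing reduced factorizations of `w` into at most `n` factors. -/
def RFZn (n : ℕ) (w : Equiv.Perm ℤ) : Set (ℕ → List ℤ) :=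
  {a | (∀ i, ZDec (a i)) ∧ (∀ m, n ≤ m → a m = []) ∧ IsReducedWord w (concatZ a n)}

/-- Removing the primes from each factor of a primed factorization. -/
def unprimeF (a : ℕ → List PLetter) : ℕ → List ℤ := fun m => unprimeW (a m)

/-! ### The pairing procedure and crystal operators (primed version) -/

/-- Find the first letter `b` in the (decreasing) list with `⌈b⌉ < c`, removing it. -/
def findPairP (c : ℤ) : List PLetter → Option PLetter × List PLetter
  | [] => (none, [])
  | b :: rest =>
      if b.1 < c then (some b, rest)
      else
        let r := findPairP c rest
        (r.1, b :: r.2)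

/-- Iterate the pairing over the letters of `v` from right to left. -/
def pairFoldP (u : List PLetter) (vrev : List PLetter) :
    List (PLetter × PLetter) × List PLetter :=
  vrev.foldl (fun st c =>
    match findPairP c.1 st.2 with
    | (none, r) => (st.1, r)
    | (some b, r) => ((b, c) :: st.1, r)) ([], u)

/-- The set `pair(u, v)` of paired letters, as a list of pairs. -/
def pairsP (u v : List PLetter) : List (PLetter × PLetter) := (pairFoldP u v.reverse).1

/-- The unpaired letters of `v` (in decreasing order). -/
def unpairedSnd (u v : List PLetter) : List PLetter :=
  v.filter fun c => decide (c ∉ (pairsP u v).map Prod.snd)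

/-- The unpaired letters of `u` (in decreasing order). -/
def unpairedFst (u v : List PLetter) : List PLetter :=
  u.filter fun b => decide (b ∉ (pairsP u v).map Prod.fst)

theorem exists_add_not_mem (L : List ℤ) (x : ℤ) : ∃ q : ℕ, x + q ∉ L := by
  have h : ∃ q : ℕ, ∀ y ∈ L, y < x + q := by
    induction L with
    | nil => exact ⟨1, by simp⟩
    | cons a t ih =>
      obtain ⟨q, hq⟩ := ih
      refine ⟨q + (a - x).toNat + 1, ?_⟩
      intro y hy
      rcases List.mem_cons.mp hy with rfl | h
      · push_cast; omega
      · have := hq y h; push_cast; omega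
  obtain ⟨q, hq⟩ := h
  exact ⟨q, fun hmem => lt_irrefl _ (hq _ hmem)⟩

theorem exists_sub_not_mem (L : List ℤ) (x : ℤ) : ∃ q : ℕ, x - q ∉ L := by
  have h : ∃ q : ℕ, ∀ y ∈ L, x - q < y := by
    induction L with
    | nil => exact ⟨1, by simp⟩
    | cons a t ih =>
      obtain ⟨q, hq⟩ := ih
      refine ⟨q + (x - a).toNat + 1, ?_⟩
      intro y hy
      rcases List.mem_cons.mp hy with rfl | h
      · push_cast; omega
      · have := hq y h; push_cast; omega
  obtain ⟨q, hq⟩ := h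
  exact ⟨q, fun hmem => lt_irrefl _ (hq _ hmem)⟩

/-- The minimal `q ∈ ℕ` with `x + q ∉ L`. -/
def qUp (L : List ℤ) (x : ℤ) : ℕ := Nat.find (exists_add_not_mem L x)

/-- The minimal `q ∈ ℕ` with `x - q ∉ L`. -/
def qDown (L : List ℤ) (x : ℤ) : ℕ := Nat.find (exists_sub_not_mem L x)

/-- Reverse the prime on a primed letter. -/
def toggleP (p : PLetter) : PLetter := (p.1, !p.2)

/-- Toggle the prime on the occurrence of the letter `p` in a primed word. -/
def toggleIn (l : List PLetter) (p : PLetter) : List PLetter :=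
  l.map fun q => if q = p then toggleP q else q

/-- Swap the primes on a pair `(b, c)` with `b` in the first word and `c` in the second:
reverse both primes when exactly one of the two letters is primed. -/
def swapPairIn (uv : List PLetter × List PLetter) (bc : PLetter × PLetter) :
    List PLetter × List PLetter :=
  if bc.1.2 = bc.2.2 then uv else (toggleIn uv.1 bc.1, toggleIn uv.2 bc.2)

/-- Insert a letter into a decreasing primed word at the correct position. -/
def insertDecP (p : PLetter) : List PLetter → List PLetter
  | [] => [p]
  | q :: t => if pval q < pval p then p :: q :: t else q :: insertDecP p t

/-- The raising crystal operator acting on a consecutive pair of factors (primed version). -/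
def eStepP (u v : List PLetter) : Option (List PLetter × List PLetter) :=
  match unpairedSnd u v with
  | [] => none
  | x :: _ =>
    let q : ℕ := qUp (unprimeW u) x.1
    let toSwap := (pairsP u v).filter fun bc => decide (x.1 < bc.2.1 ∧ bc.2.1 ≤ x.1 + q)
    some (toSwap.foldl swapPairIn (insertDecP (x.1 + q, x.2) u, v.erase x))

/-- The lowering crystal operator acting on a consecutive pair of factors (primed version). -/
def fStepP (u v : List PLetter) : Option (List PLetter × List PLetter) :=
  match (unpairedFst u v).getLast? with
  | none => none
  | some y =>
    let q : ℕ := qDown (unprimeW v) y.1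
    let toSwap := (pairsP u v).filter fun bc => decide (y.1 - q ≤ bc.1.1 ∧ bc.1.1 < y.1)
    some (toSwap.foldl swapPairIn (u.erase y, insertDecP (y.1 - q, y.2) v))

/-- Apply a two-factor operator at position `(i, i+1)` of a factorization. -/
def applyAtP (g : List PLetter → List PLetter → Option (List PLetter × List PLetter))
    (i : ℕ) (a : ℕ → List PLetter) : Option (ℕ → List PLetter) :=
  (g (a i) (a (i + 1))).map fun uv =>
    Function.update (Function.update a i uv.1) (i + 1) uv.2

/-- The crystal operator `e` on primed factorizations acting on factors `i, i+1` (0-indexed). -/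
def eP (i : ℕ) (a : ℕ → List PLetter) : Option (ℕ → List PLetter) := applyAtP eStepP i a

/-- The crystal operator `f` on primed factorizations acting on factors `i, i+1` (0-indexed). -/
def fP (i : ℕ) (a : ℕ → List PLetter) : Option (ℕ → List PLetter) := applyAtP fStepP i a

/-! ### Crystal operators (unprimed version) -/

def findPairZ (c : ℤ) : List ℤ → Option ℤ × List ℤ
  | [] => (none, [])
  | b :: rest =>
      if b < c then (some b, rest)
      else
        let r := findPairZ c rest
        (r.1, b :: r.2)

def pairFoldZ (u : List ℤ) (vrev : List ℤ) : List (ℤ × ℤ) × List ℤ :=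
  vrev.foldl (fun st c =>
    match findPairZ c st.2 with
    | (none, r) => (st.1, r)
    | (some b, r) => ((b, c) :: st.1, r)) ([], u)

/-- The set `pair(u, v)` for integer words. -/
def pairsZ (u v : List ℤ) : List (ℤ × ℤ) := (pairFoldZ u v.reverse).1

def insertDecZ (x : ℤ) : List ℤ → List ℤ
  | [] => [x]
  | q :: t => if q < x then x :: q :: t else q :: insertDecZ x t

/-- The raising crystal operator on a consecutive pair of integer factors. -/
def eStepZ (u v : List ℤ) : Option (List ℤ × List ℤ) :=
  match v.filter (fun c => decide (c ∉ (pairsZ u v).map Prod.snd)) with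
  | [] => none
  | x :: _ =>
    let q : ℕ := qUp u x
    some (insertDecZ (x + q) u, v.erase x)

/-- The lowering crystal operator on a consecutive pair of integer factors. -/
def fStepZ (u v : List ℤ) : Option (List ℤ × List ℤ) :=
  match (u.filter (fun b => decide (b ∉ (pairsZ u v).map Prod.fst))).getLast? with
  | none => none
  | some y =>
    let q : ℕ := qDown v y
    some (u.erase y, insertDecZ (y - q) v)

def applyAtZ (g : List ℤ → List ℤ → Option (List ℤ × List ℤ))
    (i : ℕ) (a : ℕ → List ℤ) : Option (ℕ → List ℤ) :=
  (g (a i) (a (i + 1))).map fun uv =>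
    Function.update (Function.update a i uv.1) (i + 1) uv.2

/-- The crystal operator `e` acting on factors `i, i+1` (0-indexed) of an integer factorization,
so that `eZ i` is the paper's `e_{i+1}`. -/
def eZ (i : ℕ) (a : ℕ → List ℤ) : Option (ℕ → List ℤ) := applyAtZ eStepZ i a

/-- The crystal operator `f` acting on factors `i, i+1` (0-indexed). -/
def fZ (i : ℕ) (a : ℕ → List ℤ) : Option (ℕ → List ℤ) := applyAtZ fStepZ i a

/-! ### Coxeter–Knuth equivalence and tableaux -/

/-- One elementary Coxeter–Knuth move. -/
inductive CKStep : List ℤ → List ℤ → Prop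
  | acb (u v : List ℤ) {a b c : ℤ} (h1 : a < b) (h2 : b < c) :
      CKStep (u ++ a :: c :: b :: v) (u ++ c :: a :: b :: v)
  | bca (u v : List ℤ) {a b c : ℤ} (h1 : a < b) (h2 : b < c) :
      CKStep (u ++ b :: c :: a :: v) (u ++ b :: a :: c :: v)
  | braid (u v : List ℤ) {a b : ℤ} (h : b = a + 1 ∨ b = a - 1) :
      CKStep (u ++ a :: b :: a :: v) (u ++ b :: a :: b :: v)

/-- Coxeter–Knuth equivalence. -/
def CKEquiv : List ℤ → List ℤ → Prop := Relation.EqvGen CKStep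

/-- A tableau is recorded as its list of rows; its shape is the list of row lengths. -/
def shapeOf (T : List (List ℤ)) : List ℕ := T.map List.length

/-- The row reading word: rows left to right, starting with the last row. -/
def rowword (T : List (List ℤ)) : List ℤ := T.reverse.flatten

/-- The reverse row reading word. -/
def revrow (T : List (List ℤ)) : List ℤ := (rowword T).reverse

/-- The entry of `T` in row `i`, position `j` within the row (both 0-indexed). -/
def entryOf (T : List (List ℤ)) (i j : ℕ) : ℤ := (T.getD i []).getD j 0

/-- `T` has partition shape: rows nonempty with weakly decreasing lengths. -/
def IsPartShape (T : List (List ℤ)) : Prop :=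
  (∀ r ∈ T, r ≠ []) ∧ ∀ i, i + 1 < T.length → (T.getD (i + 1) []).length ≤ (T.getD i []).length

/-- An increasing tableau of partition shape. -/
def IncrTab (T : List (List ℤ)) : Prop :=
  IsPartShape T ∧ (∀ r ∈ T, r.Pairwise (· < ·)) ∧
  ∀ i j, i + 1 < T.length → j < (T.getD (i + 1) []).length → entryOf T i j < entryOf T (i + 1) j

/-- A decreasing tableau of partition shape. -/
def DecrTab (T : List (List ℤ)) : Prop :=
  IsPartShape T ∧ (∀ r ∈ T, r.Pairwise (fun x y => y < x)) ∧
  ∀ i j, i + 1 < T.length → j < (T.getD (i + 1) []).length → entryOf T (i + 1) j < entryOf T i j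

/-! ### Shifted tableaux -/

/-- Strict partition shape: rows nonempty with strictly decreasing lengths.  Row `i`
(0-indexed) of a shifted tableau occupies columns `i, i+1, …`. -/
def IsStrictShape (T : List (List ℤ)) : Prop :=
  (∀ r ∈ T, r ≠ []) ∧ ∀ i, i + 1 < T.length → (T.getD (i + 1) []).length < (T.getD i []).length

/-- An increasing shifted tableau: rows and columns strictly increase.  In row-list
coordinates, the entry of row `i+1` in within-row position `j` lies in the same column as the
entry of row `i` in within-row position `j+1`. -/
def ShIncrTab (T : List (List ℤ)) : Prop :=
  IsStrictShape T ∧ (∀ r ∈ T, r.Pairwise (· < ·)) ∧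
  ∀ i j, i + 1 < T.length → j < (T.getD (i + 1) []).length →
    entryOf T i (j + 1) < entryOf T (i + 1) j

/-- A decreasing shifted tableau. -/
def ShDecrTab (T : List (List ℤ)) : Prop :=
  IsStrictShape T ∧ (∀ r ∈ T, r.Pairwise (fun x y => y < x)) ∧
  ∀ i j, i + 1 < T.length → j < (T.getD (i + 1) []).length →
    entryOf T (i + 1) j < entryOf T i (j + 1)

/-! ### Young diagrams of partitions given as lists -/

/-- The Young diagram of a partition given as a list of row lengths (1-indexed positions). -/
def YDiagL (lam : List ℕ) : Set (ℤ × ℤ) :=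
  {p | 1 ≤ p.1 ∧ 1 ≤ p.2 ∧ p.2 ≤ (lam.getD (p.1 - 1).toNat 0 : ℤ)}

/-- The tableau `T_λ` with entry `i + j - 1` in each box `(i, j)` of `D_λ` (1-indexed). -/
def Tlam (lam : List ℕ) : List (List ℤ) :=
  lam.mapIdx fun i k => (List.range k).map fun j => ((i + j + 1 : ℕ) : ℤ)

/-! ### Fixed-point-free involutions -/

def fpfFun (i : ℤ) : ℤ := if Even i then i - 1 else i + 1

theorem fpfFun_involutive : Function.Involutive fpfFun := by
  intro i
  simp only [fpfFun, Int.even_iff]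
  split <;> split <;> omega

/-- The fixed-point-free involution `1_fpf : i ↦ i - (-1)^i`. -/
def onefpf : Equiv.Perm ℤ :=
  ⟨fpfFun, fpfFun, fpfFun_involutive, fpfFun_involutive⟩

/-- `I^fpf_ℤ`: the `S_ℤ`-conjugation orbit of `1_fpf`. -/
def IfpfZ : Set (Equiv.Perm ℤ) := {z | ∃ w ∈ SZSet, z = w⁻¹ * onefpf * w}

/-- `I^fpf_∞`: the `S_∞`-conjugation orbit of `1_fpf`. -/
def IfpfInfty : Set (Equiv.Perm ℤ) := {z | ∃ w ∈ SinftySet, z = w⁻¹ * onefpf * w}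

/-- `𝒜^Sp(z)`: minimal-length `w ∈ S_ℤ` with `z = w⁻¹ 1_fpf w`. -/
def ASp (z : Equiv.Perm ℤ) : Set (Equiv.Perm ℤ) :=
  {w | w ∈ SZSet ∧ z = w⁻¹ * onefpf * w ∧
       ∀ v ∈ SZSet, z = v⁻¹ * onefpf * v → lenOf w ≤ lenOf v}

/-- `R^Sp(z)`: the set of fpf-involution words for `z`. -/
def RSp (z : Equiv.Perm ℤ) : Set (List ℤ) := {l | ∃ w ∈ ASp z, IsReducedWord w l}

/-- The fpf-involution code `c^Sp_i(z)`. -/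
noncomputable def cSp (z : Equiv.Perm ℤ) (i : ℤ) : ℕ :=
  {j : ℤ | i < j ∧ z j < min i (z i)}.ncard

/-- `RF^Sp_n(z)`: symplectic reduced factorizations into at most `n` decreasing factors. -/
def RFSp (n : ℕ) (z : Equiv.Perm ℤ) : Set (ℕ → List ℤ) :=
  {a | (∀ i, ZDec (a i)) ∧ (∀ m, n ≤ m → a m = []) ∧ concatZ a n ∈ RSp z}

/-- `BRF^Sp_n(z)`: the bounded (by the standard flag) symplectic reduced factorizations:
every letter `m` of the factor in (0-indexed) position `i` satisfies `m ≥ i + 1`. -/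
def BRFSp (n : ℕ) (z : Equiv.Perm ℤ) : Set (ℕ → List ℤ) :=
  {a | a ∈ RFSp n z ∧ ∀ m, ∀ x ∈ a m, (m : ℤ) + 1 ≤ x}

/-! ### Symplectic Coxeter–Knuth equivalence -/

/-- The extra symplectic relations, affecting the first two letters. -/
inductive SpExtra : List ℤ → List ℤ → Prop
  | down (a : ℤ) (t : List ℤ) : SpExtra (a :: (a - 1) :: t) (a :: (a + 1) :: t)
  | comm (a b : ℤ) (t : List ℤ) (h : a % 2 = b % 2) : SpExtra (a :: b :: t) (b :: a :: t)

/-- Symplectic Coxeter–Knuth equivalence. -/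
def SpCKEquiv : List ℤ → List ℤ → Prop :=
  Relation.EqvGen (fun x y => CKStep x y ∨ SpExtra x y)

/-- `half_<(λ)` for a partition given as a list: positive values among `λ_i - i`. -/
def halfLtL (lam : List ℕ) : List ℕ :=
  ((List.range lam.length).map fun k => ((lam.getD k 0 : ℤ) - (k + 1)).toNat).filter
    fun m => decide (0 < m)

/-- The shifted tableau `T^Sp_λ` of shape `half_<(λ)` with entry `i + j` in box `(i,j) ∈ SD_μ`. -/
def TSpTab (lam : List ℕ) : List (List ℤ) :=
  (halfLtL lam).mapIdx fun k m => (List.range m).map fun t => ((2 * (k + 1) + t : ℕ) : ℤ)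

/-- Symmetric partition (list version): the diagram is invariant under transposition. -/
def SymmPartL (lam : List ℕ) : Prop :=
  ∀ p : ℤ × ℤ, p ∈ YDiagL lam ↔ (p.2, p.1) ∈ YDiagL lam

/-- Skew-symmetric partition (list version). -/
def SkewSymmPartL (lam : List ℕ) : Prop :=
  SymmPartL lam ∧ ∀ i : ℤ, (i, i) ∈ YDiagL lam → (i + 1, i + 1) ∉ YDiagL lam →
    (¬ ∃ mu : List ℕ, mu.Pairwise (· ≥ ·) ∧ YDiagL mu = YDiagL lam ∪ {(i, i + 1)} ∧
        YDiagL mu ≠ YDiagL lam) ∧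
    (¬ ∃ mu : List ℕ, mu.Pairwise (· ≥ ·) ∧ YDiagL mu = YDiagL lam \ {(i, i + 1)} ∧
        YDiagL mu ≠ YDiagL lam)

/-! ### Demazure product, orthogonal involution words -/

/-- One step of the Demazure product: multiply by `s_i` on the left if this increases length. -/
noncomputable def demStep (i : ℤ) (x : Equiv.Perm ℤ) : Equiv.Perm ℤ :=
  if lenOf x < lenOf (sT i * x) then sT i * x else x

/-- The Demazure product of the letters of a word. -/
noncomputable def demWordProd (l : List ℤ) : Equiv.Perm ℤ := l.foldr demStep 1

/-- `𝒜^O(z)`: minimal-length `w` with `z = w⁻¹ ∘ w` (Demazure product). -/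
def AO (z : Equiv.Perm ℤ) : Set (Equiv.Perm ℤ) :=
  {w | (∃ l : List ℤ, IsReducedWord w l ∧ demWordProd (l.reverse ++ l) = z) ∧
       ∀ v : Equiv.Perm ℤ, (∃ l : List ℤ, IsReducedWord v l ∧ demWordProd (l.reverse ++ l) = z) →
         lenOf w ≤ lenOf v}

/-- `Cyc(z) = {(a, b) : a < b = z(a)}`. -/
def CycSet (z : Equiv.Perm ℤ) : Set (ℤ × ℤ) := {p | p.1 < p.2 ∧ z p.1 = p.2}

/-- `R^O(z)`: the set of primed involution words for `z`. -/
def RO (z : Equiv.Perm ℤ) : Set (List PLetter) :=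
  {l | ∃ A ⊆ CycSet z, ∃ w ∈ AO z, IsPrimedReducedWord w l ∧ markedSet l = A}

/-- The involution code `c^O_i(z)`. -/
noncomputable def cO (z : Equiv.Perm ℤ) (i : ℤ) : ℕ :=
  {j : ℤ | i < j ∧ z j ≤ min i (z i)}.ncard

/-- `RF^O_n(z)`: orthogonal (primed) reduced factorizations into at most `n` factors. -/
def RFO (n : ℕ) (z : Equiv.Perm ℤ) : Set (ℕ → List PLetter) :=
  {a | (∀ i, PDec (a i)) ∧ (∀ m, n ≤ m → a m = []) ∧ concatP a n ∈ RO z}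

/-- The unprimed image `uRF^O_n(z)` of `RF^O_n(z)`. -/
def uRFO (n : ℕ) (z : Equiv.Perm ℤ) : Set (ℕ → List ℤ) := unprimeF '' RFO n z

/-! ### Primed and orthogonal Coxeter–Knuth equivalence -/

/-- One elementary primed Coxeter–Knuth move. -/
inductive PCKStep : List PLetter → List PLetter → Prop
  | swapACB (u v : List PLetter) {A B C : PLetter} (h1 : A.1 < B.1) (h2 : B.1 < C.1) :
      PCKStep (u ++ A :: C :: B :: v) (u ++ C :: A :: B :: v)
  | swapBCA (u v : List PLetter) {A B C : PLetter} (h1 : A.1 < B.1) (h2 : B.1 < C.1) :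
      PCKStep (u ++ B :: C :: A :: v) (u ++ B :: A :: C :: v)
  | braid00 (u v : List PLetter) {a b : ℤ} (h : b = a + 1 ∨ b = a - 1) :
      PCKStep (u ++ (a, false) :: (b, false) :: (a, false) :: v)
              (u ++ (b, false) :: (a, false) :: (b, false) :: v)
  | braid11 (u v : List PLetter) {a b : ℤ} (h : b = a + 1 ∨ b = a - 1) :
      PCKStep (u ++ (a, true) :: (b, true) :: (a, true) :: v)
              (u ++ (b, true) :: (a, true) :: (b, true) :: v)
  | mixA (u v : List PLetter) {a b : ℤ} (h : b = a + 1 ∨ b = a - 1) :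
      PCKStep (u ++ (a, true) :: (b, false) :: (a, false) :: v)
              (u ++ (b, false) :: (a, false) :: (b, true) :: v)
  | mixB (u v : List PLetter) {a b : ℤ} (h : b = a + 1 ∨ b = a - 1) :
      PCKStep (u ++ (a, false) :: (b, true) :: (a, false) :: v)
              (u ++ (b, false) :: (a, true) :: (b, false) :: v)
  | mixC (u v : List PLetter) {a b : ℤ} (h : b = a + 1 ∨ b = a - 1) :
      PCKStep (u ++ (a, true) :: (b, true) :: (a, false) :: v)
              (u ++ (b, false) :: (a, true) :: (b, true) :: v)
  | mixD (u v : List PLetter) {a b : ℤ} (h : b = a + 1 ∨ b = a - 1) :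
      PCKStep (u ++ (a, true) :: (b, false) :: (a, true) :: v)
              (u ++ (b, true) :: (a, false) :: (b, true) :: v)

/-- The extra orthogonal relations, affecting the first letters of words. -/
inductive OExtra : List PLetter → List PLetter → Prop
  | prime (a : ℤ) (w : List PLetter) : OExtra ((a, false) :: w) ((a, true) :: w)
  | comm00 (a b : ℤ) (w : List PLetter) :
      OExtra ((a, false) :: (b, false) :: w) ((b, false) :: (a, false) :: w)
  | comm01 (a b : ℤ) (w : List PLetter) :
      OExtra ((a, false) :: (b, true) :: w) ((b, false) :: (a, true) :: w)
  | comm10 (a b : ℤ) (w : List PLetter) :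
      OExtra ((a, true) :: (b, false) :: w) ((b, true) :: (a, false) :: w)
  | comm11 (a b : ℤ) (w : List PLetter) :
      OExtra ((a, true) :: (b, true) :: w) ((b, true) :: (a, true) :: w)

/-- Orthogonal Coxeter–Knuth equivalence. -/
def OCKEquiv : List PLetter → List PLetter → Prop :=
  Relation.EqvGen (fun x y => PCKStep x y ∨ OExtra x y)

/-- Increasing shifted tableau with primed entries: removing the primes yields an increasing
shifted tableau. -/
def ShIncrTabP (T : List (List PLetter)) : Prop := ShIncrTab (T.map unprimeW)

/-- Decreasing shifted tableau with primed entries. -/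
def ShDecrTabP (T : List (List PLetter)) : Prop := ShDecrTab (T.map unprimeW)

/-- No primed entries on the main diagonal (the first entry of each row). -/
def DiagUnprimed (T : List (List PLetter)) : Prop :=
  ∀ r ∈ T, ∀ p : PLetter, r.head? = some p → p.2 = false

/-- The row reading word of a primed shifted tableau. -/
def rowwordP (T : List (List PLetter)) : List PLetter := T.reverse.flatten

/-- The shape of a primed tableau. -/
def shapeOfP (T : List (List PLetter)) : List ℕ := T.map List.length

/-! ### Iterated partial operators -/

def iterOpt {α : Type*} (g : α → Option α) : ℕ → α → Option α
  | 0, a => some a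
  | m + 1, a => (g a).bind (iterOpt g m)

/-! ### Weak compositions as functions `ℤ → ℕ` supported on positive integers -/

/-- A weak composition: nonnegative entries indexed by positive integers, finitely supported. -/
def WeakCompF (α : ℤ → ℕ) : Prop :=
  (∀ i ≤ 0, α i = 0) ∧ ∃ N : ℤ, ∀ i, N ≤ i → α i = 0

/-- A partition: a weakly decreasing weak composition. -/
def IsPartitionFun (lam : ℤ → ℕ) : Prop :=
  WeakCompF lam ∧ ∀ i : ℤ, 1 ≤ i → lam (i + 1) ≤ lam i

/-- `lam` is the decreasing rearrangement `λ(α)` of `α`: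
it is a partition with the same part multiplicities. -/
def IsDecRearr (α lam : ℤ → ℕ) : Prop :=
  IsPartitionFun lam ∧ ∀ k : ℕ, 0 < k →
    {i : ℤ | 1 ≤ i ∧ k ≤ α i}.ncard = {i : ℤ | 1 ≤ i ∧ k ≤ lam i}.ncard

/-- The Young diagram of a partition function (1-indexed positions). -/
def YDiag (lam : ℤ → ℕ) : Set (ℤ × ℤ) :=
  {p | 1 ≤ p.1 ∧ 1 ≤ p.2 ∧ p.2 ≤ (lam p.1 : ℤ)}

/-- Symmetric partition: diagram invariant under transposition. -/
def SymmPartF (lam : ℤ → ℕ) : Prop :=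
  IsPartitionFun lam ∧ ∀ p : ℤ × ℤ, p ∈ YDiag lam ↔ (p.2, p.1) ∈ YDiag lam

/-- Skew-symmetric partition. -/
def SkewSymmPartF (lam : ℤ → ℕ) : Prop :=
  SymmPartF lam ∧ ∀ i : ℤ, (i, i) ∈ YDiag lam → (i + 1, i + 1) ∉ YDiag lam →
    (¬ ∃ mu : ℤ → ℕ, IsPartitionFun mu ∧ YDiag mu = YDiag lam ∪ {(i, i + 1)} ∧
        YDiag mu ≠ YDiag lam) ∧
    (¬ ∃ mu : ℤ → ℕ, IsPartitionFun mu ∧ YDiag mu = YDiag lam \ {(i, i + 1)} ∧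
        YDiag mu ≠ YDiag lam)

/-- The Demazure action of a simple transposition on weak compositions:
sort the entries in positions `i, i+1` into weakly increasing order. -/
def sComp (i : ℤ) (β : ℤ → ℕ) : ℤ → ℕ :=
  if β (i + 1) < β i then
    (fun j => if j = i then β (i + 1) else if j = i + 1 then β i else β j)
  else β

/-- The Demazure action of a word on a weak composition (rightmost letter acts first). -/
def demCompAct (l : List ℤ) (β : ℤ → ℕ) : ℤ → ℕ := l.foldr sComp β

/-- `u = u(α)`: the minimal-length permutation with `α = u ∘ λ(α)` under the Demazure action. -/
def IsUofAlpha (α lam : ℤ → ℕ) (u : Equiv.Perm ℤ) : Prop :=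
  u ∈ SinftySet ∧ (∃ l : List ℤ, IsReducedWord u l ∧ demCompAct l lam = α) ∧
  ∀ v ∈ SinftySet, (∃ l : List ℤ, IsReducedWord v l ∧ demCompAct l lam = α) → lenOf u ≤ lenOf v

/-! ### Isobaric divided differences, Schubert polynomials -/

/-- `g = π_i f`, i.e. `(x_i - x_{i+1}) g = x_i f - x_{i+1} (s_i f)`. -/
def IsPiApply (i : ℤ) (f g : MvPolynomial ℤ ℤ) : Prop :=
  (X i - X (i + 1)) * g = X i * f - X (i + 1) * MvPolynomial.rename (sT i) f

/-- `g = π_{i_1} π_{i_2} ⋯ π_{i_k} f` for the word `l = [i_1, …, i_k]`. -/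
inductive IsPiWord : List ℤ → MvPolynomial ℤ ℤ → MvPolynomial ℤ ℤ → Prop
  | nil (f : MvPolynomial ℤ ℤ) : IsPiWord [] f f
  | cons (i : ℤ) (t : List ℤ) (f h g : MvPolynomial ℤ ℤ) :
      IsPiWord t f h → IsPiApply i h g → IsPiWord (i :: t) f g

/-- The dominant monomial `x^λ = ∏_{k=1}^{M} x_k^{λ_k}`. -/
noncomputable def xpow (lam : ℤ → ℕ) (M : ℕ) : MvPolynomial ℤ ℤ :=
  ∏ k ∈ Finset.range M, (X ((k : ℤ) + 1) : MvPolynomial ℤ ℤ) ^ lam ((k : ℤ) + 1)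

/-- The defining axioms of the family of Schubert polynomials `{𝔖_w}_{w ∈ S_∞}`:
`𝔖_w = x^λ` for `w` dominant of shape `λ`, and
`∂_i 𝔖_w = 𝔖_{w s_i}` whenever `w(i) > w(i+1)` (cleared of denominators). -/
def IsSchubertFamily (Sf : Equiv.Perm ℤ → MvPolynomial ℤ ℤ) : Prop :=
  (∀ w ∈ SinftySet, ∀ lam : ℤ → ℕ, IsPartitionFun lam → RotheD w = YDiag lam →
     ∀ M : ℕ, (∀ i : ℤ, (M : ℤ) < i → lam i = 0) → Sf w = xpow lam M) ∧
  (∀ w ∈ SinftySet, ∀ i : ℤ, 1 ≤ i → w (i + 1) < w i →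
     (X i - X (i + 1)) * Sf (w * sT i) = Sf w - MvPolynomial.rename (sT i) (Sf w))

/-- Substituting `x_m = 0` for all `m > n` in a polynomial. -/
noncomputable def restrictVars (n : ℕ) (g : MvPolynomial ℤ ℤ) : MvPolynomial ℤ ℤ :=
  (MvPolynomial.aeval fun m : ℤ => if m ≤ (n : ℤ) then (X m : MvPolynomial ℤ ℤ) else 0) g

/-! ### Queer crystal operators `ē_1`, `f̄_1`, `σ_i` on symplectic factorizations -/

/-- Insert a letter directly after the first letter of a list. -/
def insertAfterFirst (c : ℤ) : List ℤ → List ℤ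
  | [] => [c]
  | x :: t => x :: c :: t

/-- The operator `ē_1` on symplectic reduced factorizations. -/
def e1barOp (a : ℕ → List ℤ) : Option (ℕ → List ℤ) :=
  match a 1 with
  | [] => none
  | y :: s =>
    if ∀ x ∈ a 0, x < y then
      if Even y then
        some (Function.update (Function.update a 1 s) 0 (y :: a 0))
      else
        some (Function.update (Function.update a 1 s) 0 (insertAfterFirst (y - 2) (a 0)))
    else none

/-- The operator `f̄_1` on symplectic reduced factorizations. -/
def f1barOp (a : ℕ → List ℤ) : Option (ℕ → List ℤ) :=
  match a 0 with
  | [] => none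
  | x :: _ =>
    if ∀ y ∈ a 1, y < x then
      if (x - 1) ∈ a 0 then
        some (Function.update (Function.update a 0 ((a 0).erase (x - 1))) 1 ((x + 1) :: a 1))
      else
        some (Function.update (Function.update a 0 ((a 0).erase x)) 1 (x :: a 1))
    else none

/-- The string-reversing operator `σ` acting on factors `i, i+1` (0-indexed):
apply `f^k` where `k = wt_i - wt_{i+1}` if `k ≥ 0`, and `e^{-k}` otherwise. -/
def sigZ (i : ℕ) (a : ℕ → List ℤ) : Option (ℕ → List ℤ) :=
  if (a (i + 1)).length ≤ (a i).length then
    iterOpt (fZ i) ((a i).length - (a (i + 1)).length) a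
  else
    iterOpt (eZ i) ((a (i + 1)).length - (a i).length) a

/-- The operators `ē_{j+1}` (0-indexed `j`), defined by
`ē_i = σ_{i-1} σ_i ē_{i-1} σ_i σ_{i-1}`. -/
def ebarOp : ℕ → (ℕ → List ℤ) → Option (ℕ → List ℤ)
  | 0 => e1barOp
  | j + 1 => fun a =>
      (sigZ j a).bind fun b => (sigZ (j + 1) b).bind fun c =>
        (ebarOp j c).bind fun d => (sigZ (j + 1) d).bind (sigZ j)

/-- The operators `f̄_{j+1}` (0-indexed `j`). -/
def fbarOp : ℕ → (ℕ → List ℤ) → Option (ℕ → List ℤ)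
  | 0 => f1barOp
  | j + 1 => fun a =>
      (sigZ j a).bind fun b => (sigZ (j + 1) b).bind fun c =>
        (fbarOp j c).bind fun d => (sigZ (j + 1) d).bind (sigZ j)

/-! ### Crystal Demazure operators on symplectic factorizations -/

/-- The crystal Demazure operator `𝔇_i` (paper-indexed `i ∈ [n-1]`) inside the ambient
crystal `RF^Sp_n(z)`:  all `b` with `e_i^m(b) ∈ X` for some `m ∈ ℕ`. -/
def DOpSp (n : ℕ) (z : Equiv.Perm ℤ) (i : ℤ) (Xs : Set (ℕ → List ℤ)) : Set (ℕ → List ℤ) :=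
  {b | b ∈ RFSp n z ∧ ∃ m : ℕ, ∃ b', iterOpt (eZ (i - 1).toNat) m b = some b' ∧ b' ∈ Xs}

/-- `𝔇_{i_1} 𝔇_{i_2} ⋯ 𝔇_{i_k} X` for the word `l = [i_1, …, i_k]`. -/
def DemFoldSp (n : ℕ) (z : Equiv.Perm ℤ) (l : List ℤ) (Xs : Set (ℕ → List ℤ)) :
    Set (ℕ → List ℤ) :=
  l.foldr (fun i Y => DOpSp n z i Y) Xs
/-- `RF_n(T)`: unprimed factorizations of `w` whose concatenation is Coxeter–Knuth equivalent
to `revrow(T)`. -/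
def RFZnTincr (n : ℕ) (w : Equiv.Perm ℤ) (T : List (List ℤ)) : Set (ℕ → List ℤ) :=
  {a | a ∈ RFZn n w ∧ CKEquiv (concatZ a n) (revrow T)}

/-!
Edelman–Greene insertion is constant on Coxeter–Knuth classes of reduced words: inserting the two
sides of an elementary Coxeter–Knuth move into a row gives the same row, and bumped words that
are equal or again related by an elementary move (the words that would break this are never
reduced). Since inserting the row word of an increasing tableau returns the tableau, an increasing
tableau is determined by the Coxeter–Knuth class of its reduced row word.

For decreasing factors `u, v`, the greedy pairing leaves no letter of `v` unpaired exactly when, by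
a Hall-type count, the reversals of `u` and `v` can be consecutive rows of an increasing tableau.
Hence the row factorization of `T` is killed by every `e_i`, and every highest weight element of
`RF_n(T)` is the row factorization of an increasing tableau whose row word is Coxeter–Knuth
equivalent to that of `T`, hence of `T` itself.
-/

/-! ### Reduced words -/

theorem wordProd_cons (x : ℤ) (l : List ℤ) : wordProd (x :: l) = sT x * wordProd l := by
  simp [wordProd]

theorem wordProd_append (u v : List ℤ) : wordProd (u ++ v) = wordProd u * wordProd v := by
  simp [wordProd]

theorem sT_mul_self (i : ℤ) : sT i * sT i = 1 := Equiv.swap_mul_self _ _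

theorem sT_comm {i j : ℤ} (h : i + 2 ≤ j ∨ j + 2 ≤ i) : sT i * sT j = sT j * sT i := by
  ext k
  simp only [sT, Equiv.Perm.mul_apply, Equiv.swap_apply_def]
  split_ifs <;> omega

theorem sT_braid (a : ℤ) : sT a * sT (a + 1) * sT a = sT (a + 1) * sT a * sT (a + 1) := by
  ext k
  simp only [sT, Equiv.Perm.mul_apply, Equiv.swap_apply_def]
  split_ifs <;> omega

theorem wordProd_reverse (l : List ℤ) : wordProd l.reverse = (wordProd l)⁻¹ := by
  rw [wordProd, wordProd, List.prod_inv_reverse, List.map_map, List.map_reverse]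
  congr 3

theorem wordProd_cons_append_singleton_of_far {x : ℤ} {mid : List ℤ}
    (h : ∀ z ∈ mid, z + 2 ≤ x ∨ x + 2 ≤ z) :
    wordProd (x :: mid ++ [x]) = wordProd mid := by
  induction mid with
  | nil => simpa [wordProd] using sT_mul_self x
  | cons z t ih =>
    rw [List.forall_mem_cons] at h
    calc wordProd (x :: (z :: t) ++ [x]) = sT z * (sT x * wordProd (t ++ [x])) := by
          simp only [List.cons_append, wordProd_cons, ← mul_assoc, sT_comm h.1]
      _ = wordProd (z :: t) := by
          rw [← wordProd_cons, ← List.cons_append, ih h.2, wordProd_cons]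

def IsReducedList (l : List ℤ) : Prop :=
  ∀ m : List ℤ, wordProd m = wordProd l → l.length ≤ m.length

theorem IsReducedWord.isReducedList {w : Equiv.Perm ℤ} {l : List ℤ} (h : IsReducedWord w l) :
    IsReducedList l :=
  fun m hm => h.2 m (hm.trans h.1)

namespace IsReducedList

variable {l l' u v : List ℤ}

theorem of_wordProd_eq (h : IsReducedList l) (hp : wordProd l = wordProd l')
    (hlen : l.length = l'.length) : IsReducedList l' :=
  fun m hm => hlen ▸ h m (hm.trans hp.symm)

theorem of_append_left (h : IsReducedList (u ++ v)) : IsReducedList u := fun m hm => by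
  simpa using h (m ++ v) (by rw [wordProd_append, wordProd_append, hm])

theorem of_append_right (h : IsReducedList (u ++ v)) : IsReducedList v := fun m hm => by
  simpa using h (u ++ m) (by rw [wordProd_append, wordProd_append, hm])

theorem reverse (h : IsReducedList l) : IsReducedList l.reverse := fun m hm => by
  simpa using h m.reverse (by rw [wordProd_reverse, hm, wordProd_reverse, inv_inv])

end IsReducedList

theorem not_isReducedList_of_far (u mid v : List ℤ) {x : ℤ}
    (h : ∀ z ∈ mid, z + 2 ≤ x ∨ x + 2 ≤ z) : ¬ IsReducedList (u ++ x :: (mid ++ x :: v)) := by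
  intro hred
  have := hred (u ++ mid ++ v) (by
    rw [show u ++ x :: (mid ++ x :: v) = u ++ (x :: mid ++ [x]) ++ v by simp]
    simp only [wordProd_append, wordProd_cons_append_singleton_of_far h])
  simp at this

theorem not_isReducedList_cons_cons (u v : List ℤ) (x : ℤ) : ¬ IsReducedList (u ++ x :: x :: v) :=
  not_isReducedList_of_far u [] v (by simp)

/-! ### Coxeter–Knuth equivalence -/

inductive CKMove : List ℤ → List ℤ → Prop
  | acb {a b c : ℤ} (h1 : a < b) (h2 : b < c) : CKMove [a, c, b] [c, a, b]
  | bca {a b c : ℤ} (h1 : a < b) (h2 : b < c) : CKMove [b, c, a] [b, a, c]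
  | braid (a : ℤ) : CKMove [a, a + 1, a] [a + 1, a, a + 1]

namespace CKMove

variable {m m' : List ℤ}

theorem length_eq_three (h : CKMove m m') : m.length = 3 ∧ m'.length = 3 := by
  cases h <;> simp

theorem wordProd_eq (h : CKMove m m') : wordProd m = wordProd m' := by
  cases h with
  | @acb a b c h1 h2 =>
    simp only [wordProd, List.map_cons, List.map_nil, List.prod_cons, List.prod_nil, mul_one]
    rw [← mul_assoc, ← mul_assoc, sT_comm (by omega)]
  | @bca a b c h1 h2 =>
    simp only [wordProd, List.map_cons, List.map_nil, List.prod_cons, List.prod_nil, mul_one]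
    rw [sT_comm (i := c) (by omega)]
  | braid a => simpa [wordProd, mul_assoc] using sT_braid a

end CKMove

namespace CKStep

variable {l l' : List ℤ}

theorem exists_ckMove (h : CKStep l l') : ∃ u v m m', (CKMove m m' ∨ CKMove m' m) ∧
    l = u ++ m ++ v ∧ l' = u ++ m' ++ v := by
  cases h with
  | acb u v h1 h2 => exact ⟨u, v, _, _, .inl (.acb h1 h2), by simp, by simp⟩
  | bca u v h1 h2 => exact ⟨u, v, _, _, .inl (.bca h1 h2), by simp, by simp⟩
  | @braid u v a b h =>
    obtain rfl | rfl := h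
    · exact ⟨u, v, _, _, .inl (.braid a), by simp, by simp⟩
    · exact ⟨u, v, _, _, .inr (by simpa using CKMove.braid (a - 1)), by simp, by simp⟩

theorem wordProd_eq (h : CKStep l l') : wordProd l = wordProd l' := by
  obtain ⟨u, v, m, m', hm | hm, rfl, rfl⟩ := h.exists_ckMove <;>
    simp only [wordProd_append, hm.wordProd_eq]

theorem length_eq (h : CKStep l l') : l.length = l'.length := by
  cases h <;> simp

theorem append_left (h : CKStep l l') (p : List ℤ) : CKStep (p ++ l) (p ++ l') := by
  cases h with
  | acb u v h1 h2 => simpa using CKStep.acb (p ++ u) v h1 h2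
  | bca u v h1 h2 => simpa using CKStep.bca (p ++ u) v h1 h2
  | braid u v h => simpa using CKStep.braid (p ++ u) v h

theorem append_right (h : CKStep l l') (p : List ℤ) : CKStep (l ++ p) (l' ++ p) := by
  cases h with
  | acb u v h1 h2 => simpa using CKStep.acb u (v ++ p) h1 h2
  | bca u v h1 h2 => simpa using CKStep.bca u (v ++ p) h1 h2
  | braid u v h => simpa using CKStep.braid u (v ++ p) h

theorem reverse (h : CKStep l l') : CKStep l.reverse l'.reverse := by
  cases h with
  | acb u v h1 h2 => simpa using CKStep.bca v.reverse u.reverse h1 h2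
  | bca u v h1 h2 => simpa using CKStep.acb v.reverse u.reverse h1 h2
  | braid u v h => simpa using CKStep.braid v.reverse u.reverse h

end CKStep

namespace CKEquiv

variable {l l' l'' : List ℤ}

theorem refl (l : List ℤ) : CKEquiv l l := Relation.EqvGen.refl l

theorem symm (h : CKEquiv l l') : CKEquiv l' l := Relation.EqvGen.symm _ _ h

theorem trans (h : CKEquiv l l') (h' : CKEquiv l' l'') : CKEquiv l l'' :=
  Relation.EqvGen.trans _ _ _ h h'

theorem of_step (h : CKStep l l') : CKEquiv l l' := Relation.EqvGen.rel _ _ h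

theorem map {f : List ℤ → List ℤ} (hf : ∀ a b, CKStep a b → CKStep (f a) (f b))
    (h : CKEquiv l l') : CKEquiv (f l) (f l') := by
  induction h with
  | rel a b hab => exact of_step (hf a b hab)
  | refl a => exact refl _
  | symm a b _ ih => exact ih.symm
  | trans a b c _ _ ih ih' => exact ih.trans ih'

theorem eq_of_step {β : Type*} {f : List ℤ → β} (hf : ∀ a b, CKStep a b → f a = f b)
    (h : CKEquiv l l') : f l = f l' := by
  induction h with
  | rel a b hab => exact hf a b hab
  | refl a => rfl
  | symm a b _ ih => exact ih.symm
  | trans a b c _ _ ih ih' => exact ih.trans ih'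

theorem append_left (h : CKEquiv l l') (p : List ℤ) : CKEquiv (p ++ l) (p ++ l') :=
  h.map fun _ _ hab => hab.append_left p

theorem append_right (h : CKEquiv l l') (p : List ℤ) : CKEquiv (l ++ p) (l' ++ p) :=
  h.map fun _ _ hab => hab.append_right p

theorem reverse (h : CKEquiv l l') : CKEquiv l.reverse l'.reverse :=
  h.map fun _ _ hab => hab.reverse

theorem wordProd_eq (h : CKEquiv l l') : wordProd l = wordProd l' :=
  h.eq_of_step fun _ _ hab => hab.wordProd_eq

theorem length_eq (h : CKEquiv l l') : l.length = l'.length :=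
  h.eq_of_step fun _ _ hab => hab.length_eq

theorem isReducedList_iff (h : CKEquiv l l') : IsReducedList l ↔ IsReducedList l' :=
  ⟨fun hl => hl.of_wordProd_eq h.wordProd_eq h.length_eq,
    fun hl => hl.of_wordProd_eq h.symm.wordProd_eq h.symm.length_eq⟩

end CKEquiv

/-! ### Tableaux -/

@[simp] theorem rowword_nil : rowword [] = [] := rfl

theorem rowword_cons (r : List ℤ) (Q : List (List ℤ)) : rowword (r :: Q) = rowword Q ++ r := by
  simp [rowword]

theorem IncrTab.tail {r : List ℤ} {Q : List (List ℤ)} (h : IncrTab (r :: Q)) : IncrTab Q := by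
  obtain ⟨⟨hne, hlen⟩, hsort, hcol⟩ := h
  refine ⟨⟨fun s hs => hne s (by simp [hs]), fun i hi => ?_⟩, fun s hs => hsort s (by simp [hs]),
    fun i j hi hj => ?_⟩
  · simpa using hlen (i + 1) (by simpa using hi)
  · simpa [entryOf] using hcol (i + 1) j (by simpa using hi) (by simpa using hj)

/-! ### Edelman–Greene insertion -/

namespace EdelmanGreene

/-- Unlike RSK insertion, a letter already in the row leaves it unchanged and bumps `x + 1`. -/
def insertRow (x : ℤ) : List ℤ → List ℤ × Option ℤ
  | [] => ([x], none)
  | y :: t =>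
    if x < y then (x :: t, some y)
    else if x = y then (y :: t, some (x + 1))
    else (y :: (insertRow x t).1, (insertRow x t).2)

section insertRow

variable {x : ℤ} {A r : List ℤ}

theorem insertRow_append (hA : ∀ z ∈ A, z < x) (T : List ℤ) :
    insertRow x (A ++ T) = (A ++ (insertRow x T).1, (insertRow x T).2) := by
  induction A with
  | nil => simp
  | cons a A ih =>
    rw [List.forall_mem_cons] at hA
    simp [insertRow, not_lt.mpr hA.1.le, hA.1.ne', ih hA.2]

theorem insertRow_of_forall_lt (h : ∀ z ∈ r, z < x) : insertRow x r = (r ++ [x], none) := by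
  simpa [insertRow] using insertRow_append h []

theorem insertRow_append_self (hA : ∀ z ∈ A, z < x) (S : List ℤ) :
    insertRow x (A ++ x :: S) = (A ++ x :: S, some (x + 1)) := by
  simp [insertRow_append hA, insertRow]

theorem insertRow_append_of_lt {y : ℤ} (hA : ∀ z ∈ A, z < x) (hxy : x < y) (S : List ℤ) :
    insertRow x (A ++ y :: S) = (A ++ x :: S, some y) := by
  simp [insertRow_append hA, insertRow, hxy]

end insertRow

theorem exists_split_of_pairwise {r : List ℤ} (hr : r.Pairwise (· < ·)) (x : ℤ) :
    (∀ z ∈ r, z < x) ∨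
    ∃ A y S, r = A ++ y :: S ∧ (∀ z ∈ A, z < x) ∧ x ≤ y ∧ ∀ z ∈ S, y < z := by
  induction r with
  | nil => simp
  | cons b t ih =>
    rw [List.pairwise_cons] at hr
    by_cases hbx : b < x
    · rcases ih hr.2 with hall | ⟨A, y, S, rfl, hA, hxy, hS⟩
      · exact .inl (List.forall_mem_cons.mpr ⟨hbx, hall⟩)
      · exact .inr ⟨b :: A, y, S, rfl, List.forall_mem_cons.mpr ⟨hbx, hA⟩, hxy, hS⟩
    · exact .inr ⟨[], b, t, rfl, by simp, not_lt.mp hbx, hr.1⟩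

theorem pairwise_append_cons_iff {A S : List ℤ} {y : ℤ} :
    (A ++ y :: S).Pairwise (· < ·) ↔ A.Pairwise (· < ·) ∧ S.Pairwise (· < ·) ∧
      (∀ z ∈ A, z < y) ∧ (∀ z ∈ S, y < z) ∧ ∀ z ∈ A, ∀ z' ∈ S, z < z' := by
  simp only [List.pairwise_append, List.pairwise_cons, List.mem_cons, forall_eq_or_imp]
  constructor
  · rintro ⟨hA, ⟨hyS, hS⟩, hAS⟩
    exact ⟨hA, hS, fun z hz => (hAS z hz).1, hyS, fun z hz => (hAS z hz).2⟩
  · rintro ⟨hA, hS, hAy, hyS, hAS⟩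
    exact ⟨hA, ⟨hyS, hS⟩, fun z hz => ⟨hAy z hz, hAS z hz⟩⟩

theorem pairwise_insertRow {x : ℤ} {r : List ℤ} (hr : r.Pairwise (· < ·)) :
    (insertRow x r).1.Pairwise (· < ·) := by
  rcases exists_split_of_pairwise hr x with hall | ⟨A, y, S, rfl, hA, hxy, hS⟩
  · rw [insertRow_of_forall_lt hall]
    exact List.pairwise_append.mpr ⟨hr, by simp, fun a ha b hb => by simp_all⟩
  obtain rfl | hxy := hxy.eq_or_lt
  · rwa [insertRow_append_self hA]
  · rw [insertRow_append_of_lt hA hxy]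
    obtain ⟨hAs, hSs, -, -, hAS⟩ := pairwise_append_cons_iff.mp hr
    exact pairwise_append_cons_iff.mpr
      ⟨hAs, hSs, hA, fun z hz => hxy.trans (hS z hz), hAS⟩

theorem ckEquiv_cons_append_singleton {S : List ℤ} (hS : S.Pairwise (· < ·)) {b x : ℤ}
    (hxb : x < b) (hbS : ∀ s ∈ S, b < s) : CKEquiv (b :: (S ++ [x])) (b :: x :: S) := by
  induction S generalizing b with
  | nil => exact .refl _
  | cons s S ih =>
    rw [List.pairwise_cons] at hS
    have hbs : b < s := hbS s (by simp)
    have inner := (ih hS.2 (hxb.trans hbs) hS.1).append_left [b]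
    exact inner.trans (.of_step (by simpa using CKStep.bca [] S hxb hbs))

theorem ckEquiv_append_cons_cons {A : List ℤ} (hA : A.Pairwise (· < ·)) {x y : ℤ} (t : List ℤ)
    (hAx : ∀ z ∈ A, z < x) (hxy : x < y) : CKEquiv (A ++ y :: x :: t) (y :: (A ++ x :: t)) := by
  induction A with
  | nil => exact .refl _
  | cons a A ih =>
    rw [List.pairwise_cons] at hA
    rw [List.forall_mem_cons] at hAx
    have inner := (ih hA.2 hAx.2).append_left [a]
    refine inner.trans (.of_step ?_)
    cases A with
    | nil => simpa using CKStep.acb [] t hAx.1 hxy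
    | cons a' A =>
      have := CKStep.acb [] (A ++ x :: t) (hA.1 a' (by simp))
        ((hAx.2 a' (by simp)).trans hxy)
      simpa using this

theorem ckEquiv_insertRow {x : ℤ} {r : List ℤ} (hr : r.Pairwise (· < ·))
    (hred : IsReducedList (r ++ [x])) :
    CKEquiv (r ++ [x]) ((insertRow x r).2.toList ++ (insertRow x r).1) := by
  rcases exists_split_of_pairwise hr x with hall | ⟨A, y, S, rfl, hA, hxy, hS⟩
  · simpa [insertRow_of_forall_lt hall] using CKEquiv.refl (r ++ [x])
  obtain ⟨hAs, hSs, -, -, -⟩ := pairwise_append_cons_iff.mp hr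
  obtain rfl | hxy := hxy.eq_or_lt
  · -- reducedness forces `x + 1` to follow `x` in the row; then a braid move performs the bump
    rw [insertRow_append_self hA]
    obtain _ | ⟨s, S⟩ := S
    · exact absurd hred (by simpa using not_isReducedList_cons_cons A [] x)
    rw [List.pairwise_cons] at hSs
    rcases (Int.add_one_le_of_lt (hS s (by simp))).lt_or_eq with hs | rfl
    · have hfar : ∀ z ∈ s :: S, z + 2 ≤ x ∨ x + 2 ≤ z := by
        intro z hz
        rcases List.mem_cons.mp hz with rfl | hz
        · omega
        · have := hSs.1 z hz; omega
      exact absurd hred (by simpa using not_isReducedList_of_far A (s :: S) [] hfar)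
    · have slide := (ckEquiv_cons_append_singleton hSs.2 (lt_add_one x) hSs.1).append_left
        (A ++ [x])
      have braid := CKStep.braid A S (a := x) (Or.inl rfl)
      have lift := ckEquiv_append_cons_cons hAs ((x + 1) :: S) hA (lt_add_one x)
      simpa using slide.trans ((CKEquiv.of_step (by simpa using braid)).trans lift)
  · rw [insertRow_append_of_lt hA hxy]
    have h1 := (ckEquiv_cons_append_singleton hSs hxy hS).append_left A
    simpa using h1.trans (ckEquiv_append_cons_cons hAs S hA hxy)

def insertRowWord : List ℤ → List ℤ → List ℤ × List ℤ
  | r, [] => (r, [])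
  | r, x :: w =>
    ((insertRowWord (insertRow x r).1 w).1,
      (insertRow x r).2.toList ++ (insertRowWord (insertRow x r).1 w).2)

section insertRowWord

variable {r : List ℤ}

@[simp] theorem insertRowWord_nil (r : List ℤ) : insertRowWord r [] = (r, []) := rfl

theorem insertRowWord_three {r₁ r₂ r₃ : List ℤ} {x₁ x₂ x₃ : ℤ} {o₁ o₂ o₃ : Option ℤ}
    (h₁ : insertRow x₁ r = (r₁, o₁)) (h₂ : insertRow x₂ r₁ = (r₂, o₂))
    (h₃ : insertRow x₃ r₂ = (r₃, o₃)) :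
    insertRowWord r [x₁, x₂, x₃] = (r₃, o₁.toList ++ o₂.toList ++ o₃.toList) := by
  simp [insertRowWord, h₁, h₂, h₃]

theorem length_insertRowWord_snd_le (w : List ℤ) (r : List ℤ) :
    (insertRowWord r w).2.length ≤ w.length := by
  induction w generalizing r with
  | nil => simp
  | cons x w ih =>
    have := ih (insertRow x r).1
    have : (insertRow x r).2.toList.length ≤ 1 := by cases (insertRow x r).2 <;> simp
    simp only [insertRowWord, List.length_append, List.length_cons]
    omega

theorem ckEquiv_insertRowWord (hr : r.Pairwise (· < ·)) {w : List ℤ}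
    (hred : IsReducedList (r ++ w)) :
    CKEquiv (r ++ w) ((insertRowWord r w).2 ++ (insertRowWord r w).1) := by
  induction w generalizing r with
  | nil => simpa using CKEquiv.refl r
  | cons x w ih =>
    rw [← List.singleton_append, ← List.append_assoc] at hred ⊢
    have first := (ckEquiv_insertRow hr hred.of_append_left).append_right w
    have hred' := first.isReducedList_iff.mp hred
    rw [List.append_assoc] at hred'
    have rest := (ih (pairwise_insertRow hr) hred'.of_append_right).append_left
      (insertRow x r).2.toList
    simpa [insertRowWord] using first.trans (by simpa using rest)

end insertRowWord

def insertTab : List (List ℤ) → ℤ → List (List ℤ)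
  | [], x => [[x]]
  | r :: Q, x => (insertRow x r).1 :: (insertRow x r).2.elim Q (insertTab Q)

def insertWord (Q : List (List ℤ)) (w : List ℤ) : List (List ℤ) := w.foldl insertTab Q

theorem insertWord_append (Q : List (List ℤ)) (u v : List ℤ) :
    insertWord Q (u ++ v) = insertWord (insertWord Q u) v := List.foldl_append

theorem insertWord_cons_row (r : List ℤ) (Q : List (List ℤ)) (w : List ℤ) :
    insertWord (r :: Q) w = (insertRowWord r w).1 :: insertWord Q (insertRowWord r w).2 := by
  induction w generalizing r Q with
  | nil => rfl
  | cons x w ih =>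
    simp only [insertWord, List.foldl_cons] at ih ⊢
    rcases h : insertRow x r with ⟨r', _ | y⟩ <;> simp [insertTab, insertRowWord, h, ih]

theorem insertWord_nil_of_ne_nil {w : List ℤ} (hw : w ≠ []) :
    insertWord [] w = insertWord [[]] w := by
  obtain ⟨x, w, rfl⟩ := List.exists_cons_of_ne_nil hw
  rfl

theorem pairwise_insertTab {Q : List (List ℤ)} (hQ : ∀ r ∈ Q, r.Pairwise (· < ·)) (x : ℤ) :
    ∀ r ∈ insertTab Q x, r.Pairwise (· < ·) := by
  induction Q generalizing x with
  | nil => simp [insertTab]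
  | cons r Q ih =>
    rw [List.forall_mem_cons] at hQ
    simp only [insertTab, List.forall_mem_cons]
    refine ⟨pairwise_insertRow hQ.1, ?_⟩
    cases (insertRow x r).2 with
    | none => exact hQ.2
    | some y => exact ih hQ.2 y

theorem ckEquiv_rowword_insertTab {Q : List (List ℤ)} (hQ : ∀ r ∈ Q, r.Pairwise (· < ·))
    {x : ℤ} (hred : IsReducedList (rowword Q ++ [x])) :
    CKEquiv (rowword (insertTab Q x)) (rowword Q ++ [x]) := by
  induction Q generalizing x with
  | nil => exact .refl _
  | cons r Q ih =>
    rw [List.forall_mem_cons] at hQ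
    rw [rowword_cons, List.append_assoc] at hred ⊢
    have row := (ckEquiv_insertRow hQ.1 hred.of_append_right).append_left (rowword Q)
    simp only [insertTab]
    rcases h : (insertRow x r).2 with _ | y
    · simpa [rowword_cons, h] using row.symm
    · have hred' : IsReducedList (rowword Q ++ [y]) := by
        have := row.isReducedList_iff.mp hred
        rw [h] at this
        exact (by simpa using this : IsReducedList ((rowword Q ++ [y]) ++ _)).of_append_left
      have := (ih hQ.2 hred').append_right (insertRow x r).1
      simpa [rowword_cons, h] using this.trans (by simpa [h] using row.symm)

theorem pairwise_insertWord {Q : List (List ℤ)} (hQ : ∀ r ∈ Q, r.Pairwise (· < ·))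
    (w : List ℤ) : ∀ r ∈ insertWord Q w, r.Pairwise (· < ·) := by
  induction w generalizing Q with
  | nil => exact hQ
  | cons x w ih => exact ih (pairwise_insertTab hQ x)

theorem ckEquiv_rowword_insertWord {Q : List (List ℤ)} (hQ : ∀ r ∈ Q, r.Pairwise (· < ·))
    {w : List ℤ} (hred : IsReducedList (rowword Q ++ w)) :
    CKEquiv (rowword (insertWord Q w)) (rowword Q ++ w) := by
  induction w generalizing Q with
  | nil => simpa [insertWord] using CKEquiv.refl (rowword Q)
  | cons x w ih =>
    rw [← List.singleton_append, ← List.append_assoc] at hred ⊢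
    have first := ckEquiv_rowword_insertTab hQ hred.of_append_left
    have rest := ih (pairwise_insertTab hQ x) ((first.append_right w).isReducedList_iff.mpr hred)
    exact rest.trans (first.append_right w)

section bumps

variable {x y p e : ℤ} {A T r : List ℤ}

theorem forall_lt_append_singleton (hA : ∀ z ∈ A, z < y) (hx : x < y) :
    ∀ z ∈ A ++ [x], z < y := by
  simpa [or_imp, forall_and] using ⟨hA, hx⟩

theorem insertRow_append_cons_of_le (hA : ∀ z ∈ A, z < x) (hxp : x ≤ p) (T : List ℤ) :
    insertRow x (A ++ p :: T) = (A ++ x :: T, some (if x = p then x + 1 else p)) := by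
  obtain rfl | hxp := hxp.eq_or_lt
  · simp [insertRow_append_self hA]
  · simp [insertRow_append_of_lt hA hxp, hxp.ne]

theorem insertRow_append_cons_of_lt (hA : ∀ z ∈ A, z < y) (hp : p < y) (T : List ℤ) :
    insertRow y (A ++ p :: T) = (A ++ p :: (insertRow y T).1, (insertRow y T).2) := by
  simpa using insertRow_append (forall_lt_append_singleton hA hp) T

theorem mem_insertRow_fst_self (x : ℤ) (r : List ℤ) : x ∈ (insertRow x r).1 := by
  induction r with
  | nil => simp [insertRow]
  | cons b t ih => unfold insertRow; split_ifs <;> simp_all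

theorem mem_of_mem_insertRow_fst {z : ℤ} (hz : z ∈ (insertRow x r).1) : z = x ∨ z ∈ r := by
  induction r with
  | nil => simpa [insertRow] using hz
  | cons b t ih =>
    unfold insertRow at hz
    split_ifs at hz <;> simp only [List.mem_cons] at hz ⊢ <;> grind

theorem insertRow_snd_eq_some (h : (insertRow x r).2 = some y) :
    (x ∈ r ∧ y = x + 1) ∨ (y ∈ r ∧ x < y) := by
  induction r with
  | nil => simp [insertRow] at h
  | cons b t ih =>
    unfold insertRow at h
    split_ifs at h <;> simp_all
    tauto

theorem lt_insertRow_snd (h : (insertRow x r).2 = some y) : x < y := by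
  rcases insertRow_snd_eq_some h with ⟨-, rfl⟩ | ⟨-, h⟩ <;> omega

theorem lt_insertRow_snd_of_forall_lt (hr : ∀ z ∈ r, p < z) (h : (insertRow x r).2 = some y) :
    p < y := by
  rcases insertRow_snd_eq_some h with ⟨hx, rfl⟩ | ⟨hy, -⟩
  · exact (hr x hx).trans (lt_add_one x)
  · exact hr y hy

theorem le_of_mem_append_cons (hA : ∀ z ∈ A, z < x) (hT : ∀ z ∈ T, p < z)
    (he : e ∈ A ++ p :: T) (hxe : x ≤ e) : p ≤ e := by
  simp only [List.mem_append, List.mem_cons] at he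
  rcases he with he | rfl | he
  · exact absurd (hA e he) (not_lt.mpr hxe)
  · exact le_rfl
  · exact (hT e he).le

theorem exists_insertRow_snd_le (hr : r.Pairwise (· < ·)) (he : e ∈ r) (hxe : x < e) :
    ∃ δ, (insertRow x r).2 = some δ ∧ δ ≤ e := by
  rcases exists_split_of_pairwise hr x with hall | ⟨A, p, T, rfl, hA, hxp, hT⟩
  · exact absurd (hall e he) (not_lt.mpr hxe.le)
  have hpe := le_of_mem_append_cons hA hT he hxe.le
  rw [insertRow_append_cons_of_le hA hxp]
  exact ⟨_, rfl, by split_ifs <;> omega⟩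

theorem insertRow_comm (hr : r.Pairwise (· < ·)) (he : e ∈ r) (hxe : x ≤ e) (hey : e < y) :
    ∃ r', insertRow y (insertRow x r).1 = (r', (insertRow y r).2) ∧
      insertRow x (insertRow y r).1 = (r', (insertRow x r).2) := by
  rcases exists_split_of_pairwise hr x with hall | ⟨A, p, T, rfl, hA, hxp, hT⟩
  · exact absurd (hall e he) (not_lt.mpr hxe)
  have hpy := (le_of_mem_append_cons hA hT he hxe).trans_lt hey
  have hAy : ∀ z ∈ A, z < y := fun z hz => (hA z hz).trans (hxp.trans_lt hpy)
  refine ⟨A ++ x :: (insertRow y T).1, ?_, ?_⟩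
  · rw [insertRow_append_cons_of_le hA hxp, insertRow_append_cons_of_lt hAy (hxp.trans_lt hpy),
      insertRow_append_cons_of_lt hAy hpy]
  · rw [insertRow_append_cons_of_lt hAy hpy, insertRow_append_cons_of_le hA hxp,
      insertRow_append_cons_of_le hA hxp]

end bumps

/-- Compares two outcomes `(row, bumped word)` of `insertRowWord`. -/
def BumpCompatible (p q : List ℤ × List ℤ) : Prop := p.1 = q.1 ∧ (p.2 = q.2 ∨ CKMove p.2 q.2)

theorem BumpCompatible.of_eq {p q : List ℤ × List ℤ} (h : p = q) : BumpCompatible p q :=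
  ⟨congrArg _ h, .inl (congrArg _ h)⟩

theorem BumpCompatible.of_ckMove {r u v : List ℤ} (h : CKMove u v) :
    BumpCompatible (r, u) (r, v) :=
  ⟨rfl, .inr h⟩

section acb

variable {a b c : ℤ} {r : List ℤ}

theorem bumpCompatible_acb_of_forall_lt (hall : ∀ z ∈ r, z < a) (h1 : a < b) (h2 : b < c) :
    BumpCompatible (insertRowWord r [a, c, b]) (insertRowWord r [c, a, b]) := by
  have hb := forall_lt_append_singleton (fun z hz => (hall z hz).trans h1) h1
  have hc := fun z hz => (hall z hz).trans (h1.trans h2)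
  rw [insertRowWord_three (insertRow_of_forall_lt hall)
      (insertRow_of_forall_lt (forall_lt_append_singleton hc (h1.trans h2)))
      (insertRow_append_of_lt hb h2 []),
    insertRowWord_three (insertRow_of_forall_lt hc) (insertRow_append_of_lt hall (h1.trans h2) [])
      (insertRow_of_forall_lt hb)]
  exact .of_eq (by simp)

theorem bumpCompatible_acb_of_lt {A T : List ℤ} {p : ℤ} (hT : T.Pairwise (· < ·))
    (hA : ∀ z ∈ A, z < a) (hap : a ≤ p) (hpT : ∀ z ∈ T, p < z) (hpc : p < c)
    (h1 : a < b) (h2 : b < c) :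
    BumpCompatible (insertRowWord (A ++ p :: T) [a, c, b])
      (insertRowWord (A ++ p :: T) [c, a, b]) := by
  have hAb : ∀ z ∈ A, z < b := fun z hz => (hA z hz).trans h1
  have hAc : ∀ z ∈ A, z < c := fun z hz => (hAb z hz).trans h2
  set T' := (insertRow c T).1
  have ha := insertRow_append_cons_of_le hA hap
  have hb := insertRow_append_cons_of_lt hAb h1 T'
  rw [insertRowWord_three (ha T) (insertRow_append_cons_of_lt hAc (h1.trans h2) T) hb,
    insertRowWord_three (insertRow_append_cons_of_lt hAc hpc T) (ha T') hb]
  rcases hγ : (insertRow c T).2 with _ | γ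
  · exact .of_eq (by simp)
  obtain ⟨δ, hδ, hδc⟩ := exists_insertRow_snd_le (pairwise_insertRow hT)
    (mem_insertRow_fst_self c T) h2
  have hpT' : ∀ z ∈ T', p < z := fun z hz => by
    rcases mem_of_mem_insertRow_fst hz with rfl | hz
    exacts [hpc, hpT z hz]
  have hαδ : (if a = p then a + 1 else p) < δ := by
    have := lt_insertRow_snd hδ
    have := lt_insertRow_snd_of_forall_lt hpT' hδ
    split_ifs <;> omega
  have hδγ : δ < γ := hδc.trans_lt (lt_insertRow_snd hγ)
  rw [hδ]
  exact .of_ckMove (.acb hαδ hδγ)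

theorem bumpCompatible_acb_of_eq {A T : List ℤ} (hT : T.Pairwise (· < ·))
    (hA : ∀ z ∈ A, z < a) (hcT : ∀ z ∈ T, c < z) (h1 : a < b) (h2 : b < c)
    (hred : IsReducedList (A ++ c :: T ++ [a, c, b])) :
    BumpCompatible (insertRowWord (A ++ c :: T) [a, c, b])
      (insertRowWord (A ++ c :: T) [c, a, b]) := by
  obtain _ | ⟨w, T⟩ := T
  · exact absurd hred (by simpa using not_isReducedList_of_far A [a] [b] (x := c) (by simp; omega))
  rw [List.pairwise_cons] at hT
  have hcw : c < w := hcT w (by simp)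
  obtain hw | rfl := (Int.add_one_le_of_lt hcw).lt_or_eq
  · have hfar : ∀ z ∈ w :: T ++ [a], z + 2 ≤ c ∨ c + 2 ≤ z := by
      simp only [List.cons_append, List.mem_cons, List.mem_append, List.not_mem_nil, or_false]
      rintro z (rfl | hz | rfl)
      · omega
      · have := hT.1 z hz; omega
      · omega
    exact absurd hred (by simpa using not_isReducedList_of_far A (w :: T ++ [a]) [b] hfar)
  have hAb : ∀ z ∈ A, z < b := fun z hz => (hA z hz).trans h1
  have hAc : ∀ z ∈ A, z < c := fun z hz => (hAb z hz).trans h2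
  have ha := insertRow_append_of_lt hA (h1.trans h2) ((c + 1) :: T)
  have hbw : insertRow b (A ++ a :: (c + 1) :: T) = (A ++ a :: b :: T, some (c + 1)) := by
    simpa using insertRow_append_of_lt (forall_lt_append_singleton hAb h1) (by omega) T
  have hcw' : insertRow c (A ++ a :: (c + 1) :: T) = (A ++ a :: c :: T, some (c + 1)) := by
    simpa using insertRow_append_of_lt (forall_lt_append_singleton hAc (h1.trans h2)) hcw T
  have hbc : insertRow b (A ++ a :: c :: T) = (A ++ a :: b :: T, some c) := by
    simpa using insertRow_append_of_lt (forall_lt_append_singleton hAb h1) h2 T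
  rw [insertRowWord_three ha hcw' hbc, insertRowWord_three (insertRow_append_self hAc _) ha hbw]
  exact .of_ckMove (.braid c)

theorem bumpCompatible_acb_of_gt {A T : List ℤ} {p : ℤ} (hA : ∀ z ∈ A, z < a)
    (hpT : ∀ z ∈ T, p < z) (hcp : c < p) (h1 : a < b) (h2 : b < c) :
    BumpCompatible (insertRowWord (A ++ p :: T) [a, c, b])
      (insertRowWord (A ++ p :: T) [c, a, b]) := by
  have hAb : ∀ z ∈ A, z < b := fun z hz => (hA z hz).trans h1
  have hAc : ∀ z ∈ A, z < c := fun z hz => (hAb z hz).trans h2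
  have ha := insertRow_append_of_lt hA (by omega : a < p) T
  have hc := insertRow_append_of_lt hAc hcp T
  have hac := insertRow_append_of_lt hA (h1.trans h2) T
  obtain _ | ⟨w, T⟩ := T
  · have hc' := insertRow_of_forall_lt (forall_lt_append_singleton hAc (h1.trans h2))
    have hb := insertRow_append_of_lt (forall_lt_append_singleton hAb h1) h2 []
    rw [insertRowWord_three ha hc' hb,
      insertRowWord_three hc hac (insertRow_of_forall_lt (forall_lt_append_singleton hAb h1))]
    exact .of_eq (by simp)
  have hpw : p < w := hpT w (by simp)
  have hcw : insertRow c (A ++ a :: w :: T) = (A ++ a :: c :: T, some w) := by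
    simpa using insertRow_append_of_lt (forall_lt_append_singleton hAc (h1.trans h2))
      (hcp.trans hpw) T
  have hbc : insertRow b (A ++ a :: c :: T) = (A ++ a :: b :: T, some c) := by
    simpa using insertRow_append_of_lt (forall_lt_append_singleton hAb h1) h2 T
  have hbw : insertRow b (A ++ a :: w :: T) = (A ++ a :: b :: T, some w) := by
    simpa using insertRow_append_of_lt (forall_lt_append_singleton hAb h1) (by omega) T
  rw [insertRowWord_three ha hcw hbc, insertRowWord_three hc hac hbw]
  exact .of_ckMove (.bca hcp hpw)

theorem bumpCompatible_acb (hr : r.Pairwise (· < ·)) (h1 : a < b) (h2 : b < c)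
    (hred : IsReducedList (r ++ [a, c, b])) :
    BumpCompatible (insertRowWord r [a, c, b]) (insertRowWord r [c, a, b]) := by
  rcases exists_split_of_pairwise hr a with hall | ⟨A, p, T, rfl, hA, hap, hpT⟩
  · exact bumpCompatible_acb_of_forall_lt hall h1 h2
  have hT := (pairwise_append_cons_iff.mp hr).2.1
  rcases lt_trichotomy p c with hpc | rfl | hcp
  · exact bumpCompatible_acb_of_lt hT hA hap hpT hpc h1 h2
  · exact bumpCompatible_acb_of_eq hT hA hpT h1 h2 hred
  · exact bumpCompatible_acb_of_gt hA hpT hcp h1 h2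

end acb

section bca

variable {a b c : ℤ} {r : List ℤ}

theorem bumpCompatible_bca (hr : r.Pairwise (· < ·)) (h1 : a < b) (h2 : b < c) :
    BumpCompatible (insertRowWord r [b, c, a]) (insertRowWord r [b, a, c]) := by
  have hr₁ := pairwise_insertRow (x := b) hr
  obtain ⟨r', hca, hac⟩ := insertRow_comm hr₁ (mem_insertRow_fst_self b r) h1.le h2
  obtain ⟨α, hα, hαb⟩ := exists_insertRow_snd_le hr₁ (mem_insertRow_fst_self b r) h1
  simp only [insertRowWord, hca, hac, hα]
  rcases exists_split_of_pairwise hr b with hall | ⟨A, p, T, rfl, hA, hbp, hpT⟩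
  · have : (insertRow c (insertRow b r).1).2 = none := by
      rw [insertRow_of_forall_lt hall, insertRow_of_forall_lt]
      exact forall_lt_append_singleton (fun z hz => (hall z hz).trans h2) h2
    exact .of_eq (by simp [this])
  have hAc : ∀ z ∈ A, z < c := fun z hz => (hA z hz).trans h2
  have hb := insertRow_append_cons_of_le hA hbp T
  rcases hγ : (insertRow c (insertRow b (A ++ p :: T)).1).2 with _ | γ
  · exact .of_eq (by simp)
  rw [hb, insertRow_append_cons_of_lt hAc h2] at hγ
  have hpγ := lt_insertRow_snd_of_forall_lt hpT hγ
  have hcγ := lt_insertRow_snd hγ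
  rw [hb]
  refine .of_ckMove (.bca (b := if b = p then b + 1 else p) ?_ ?_) <;> split_ifs <;> omega

end bca

section braid
variable {a : ℤ} {A : List ℤ}

theorem bumpCompatible_braid_of_forall_lt {r : List ℤ} (hall : ∀ z ∈ r, z < a) :
    BumpCompatible (insertRowWord r [a, a + 1, a]) (insertRowWord r [a + 1, a, a + 1]) := by
  have hall' : ∀ z ∈ r, z < a + 1 := fun z hz => (hall z hz).trans (lt_add_one a)
  have hlast := insertRow_of_forall_lt (forall_lt_append_singleton hall' (lt_add_one a))
  have hspecial : insertRow a (r ++ [a] ++ [a + 1]) = (r ++ [a, a + 1], some (a + 1)) := by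
    simpa using insertRow_append_self hall [a + 1]
  rw [insertRowWord_three (insertRow_of_forall_lt hall) hlast hspecial,
    insertRowWord_three (insertRow_of_forall_lt hall')
      (insertRow_append_of_lt hall (lt_add_one a) []) hlast]
  exact .of_eq (by simp)

theorem bumpCompatible_braid_of_mem {T : List ℤ} (hT : T.Pairwise (· < ·))
    (hA : ∀ z ∈ A, z < a) (haT : ∀ z ∈ T, a < z)
    (hred : IsReducedList (A ++ a :: T ++ [a, a + 1, a])) :
    BumpCompatible (insertRowWord (A ++ a :: T) [a, a + 1, a])
      (insertRowWord (A ++ a :: T) [a + 1, a, a + 1]) := by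
  obtain _ | ⟨w, T⟩ := T
  · exact absurd hred (by simpa using not_isReducedList_cons_cons A [a + 1, a] a)
  rw [List.pairwise_cons] at hT
  have haw : a < w := haT w (by simp)
  by_cases hw : a + 2 < w
  · have hfar : ∀ z ∈ w :: T, z + 2 ≤ a ∨ a + 2 ≤ z := by
      rintro z (_ | ⟨_, hz⟩)
      · omega
      · have := hT.1 z hz; omega
    exact absurd hred (by simpa using not_isReducedList_of_far A (w :: T) [a + 1, a] hfar)
  have hAa := forall_lt_append_singleton (fun z hz => (hA z hz).trans (lt_add_one a)) (lt_add_one a)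
  have hbw : insertRow (a + 1) (A ++ a :: w :: T) = (A ++ a :: (a + 1) :: T, some (a + 1 + 1)) := by
    rw [show A ++ a :: w :: T = (A ++ [a]) ++ w :: T by simp,
      insertRow_append_cons_of_le hAa (by omega)]
    split_ifs <;> simp
    omega
  have hab := insertRow_append_self hA ((a + 1) :: T)
  have hbb : insertRow (a + 1) (A ++ a :: (a + 1) :: T)
      = (A ++ a :: (a + 1) :: T, some (a + 1 + 1)) := by
    simpa using insertRow_append_self hAa T
  rw [insertRowWord_three (insertRow_append_self hA _) hbw hab,
    insertRowWord_three hbw hab hbb]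
  exact .of_ckMove (.braid (a + 1))

theorem bumpCompatible_braid_of_succ_mem {T : List ℤ} (hT : T.Pairwise (· < ·))
    (hA : ∀ z ∈ A, z < a) (hT1 : ∀ z ∈ T, a + 1 < z)
    (hred : IsReducedList (A ++ (a + 1) :: T ++ [a, a + 1, a])) :
    BumpCompatible (insertRowWord (A ++ (a + 1) :: T) [a, a + 1, a])
      (insertRowWord (A ++ (a + 1) :: T) [a + 1, a, a + 1]) := by
  replace hred : IsReducedList (A ++ (a + 1) :: T ++ [a + 1, a, a + 1]) := by
    have braid := CKStep.braid (A ++ (a + 1) :: T) [] (a := a) (Or.inl rfl)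
    exact (CKEquiv.of_step (by simpa using braid)).isReducedList_iff.mp hred
  obtain _ | ⟨w, T⟩ := T
  · exact absurd hred (by simpa using not_isReducedList_cons_cons A [a, a + 1] (a + 1))
  rw [List.pairwise_cons] at hT
  have haw : a + 1 < w := hT1 w (by simp)
  obtain hw | rfl := (Int.add_one_le_of_lt haw).lt_or_eq
  · have hfar : ∀ z ∈ w :: T, z + 2 ≤ a + 1 ∨ a + 1 + 2 ≤ z := by
      rintro z (_ | ⟨_, hz⟩)
      · omega
      · have := hT.1 z hz; omega
    exact absurd hred (by simpa using not_isReducedList_of_far A (w :: T) [a, a + 1] hfar)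
  have hA1 : ∀ z ∈ A, z < a + 1 := fun z hz => (hA z hz).trans (lt_add_one a)
  have hab := insertRow_append_of_lt hA (lt_add_one a) ((a + 1 + 1) :: T)
  have hbw : insertRow (a + 1) (A ++ a :: (a + 1 + 1) :: T)
      = (A ++ a :: (a + 1) :: T, some (a + 1 + 1)) := by
    simpa using insertRow_append_of_lt (forall_lt_append_singleton hA1 (lt_add_one a))
      (lt_add_one (a + 1)) T
  rw [insertRowWord_three hab hbw (insertRow_append_self hA _),
    insertRowWord_three (insertRow_append_self hA1 _) hab hbw]
  exact .of_ckMove (.braid (a + 1))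

theorem bumpCompatible_braid_of_gt {T : List ℤ} {p : ℤ} (hA : ∀ z ∈ A, z < a)
    (hpT : ∀ z ∈ T, p < z) (hp : a + 1 < p) :
    BumpCompatible (insertRowWord (A ++ p :: T) [a, a + 1, a])
      (insertRowWord (A ++ p :: T) [a + 1, a, a + 1]) := by
  have hA1 : ∀ z ∈ A, z < a + 1 := fun z hz => (hA z hz).trans (lt_add_one a)
  have hAa := forall_lt_append_singleton hA1 (lt_add_one a)
  have hap := insertRow_append_of_lt hA (by omega : a < p) T
  have hbp := insertRow_append_of_lt hA1 hp T
  have hab := insertRow_append_of_lt hA (lt_add_one a) T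
  obtain _ | ⟨w, T⟩ := T
  · have hspecial : insertRow a (A ++ [a] ++ [a + 1]) = (A ++ [a, a + 1], some (a + 1)) := by
      simpa using insertRow_append_self hA [a + 1]
    have hb := insertRow_of_forall_lt hAa
    rw [insertRowWord_three hap hb hspecial, insertRowWord_three hbp hab hb]
    exact .of_eq (by simp)
  have hpw : p < w := hpT w (by simp)
  have hbw : insertRow (a + 1) (A ++ a :: w :: T) = (A ++ a :: (a + 1) :: T, some w) := by
    simpa using insertRow_append_of_lt hAa (by omega) T
  rw [insertRowWord_three hap hbw (insertRow_append_self hA _), insertRowWord_three hbp hab hbw]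
  exact .of_ckMove (.bca hp hpw)

theorem bumpCompatible_braid {r : List ℤ} (hr : r.Pairwise (· < ·))
    (hred : IsReducedList (r ++ [a, a + 1, a])) :
    BumpCompatible (insertRowWord r [a, a + 1, a]) (insertRowWord r [a + 1, a, a + 1]) := by
  rcases exists_split_of_pairwise hr a with hall | ⟨A, p, T, rfl, hA, hap, hpT⟩
  · exact bumpCompatible_braid_of_forall_lt hall
  have hT := (pairwise_append_cons_iff.mp hr).2.1
  obtain rfl | hap := hap.eq_or_lt
  · exact bumpCompatible_braid_of_mem hT hA hpT hred
  obtain rfl | hap := (Int.add_one_le_of_lt hap).eq_or_lt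
  · exact bumpCompatible_braid_of_succ_mem hT hA hpT hred
  · exact bumpCompatible_braid_of_gt hA hpT hap

end braid

theorem bumpCompatible_insertRowWord {r m m' : List ℤ} (hr : r.Pairwise (· < ·))
    (h : CKMove m m') (hred : IsReducedList (r ++ m)) :
    BumpCompatible (insertRowWord r m) (insertRowWord r m') := by
  cases h with
  | acb h1 h2 => exact bumpCompatible_acb hr h1 h2 hred
  | bca h1 h2 => exact bumpCompatible_bca hr h1 h2
  | braid a => exact bumpCompatible_braid hr hred

theorem length_insertRowWord_nil_snd_lt {w : List ℤ} (hw : w ≠ []) :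
    (insertRowWord [] w).2.length < w.length := by
  obtain ⟨x, w, rfl⟩ := List.exists_cons_of_ne_nil hw
  simpa [insertRowWord, insertRow] using Nat.lt_succ_of_le (length_insertRowWord_snd_le w [x])

theorem insertWord_eq_of_ckMove {Q : List (List ℤ)} (hQ : ∀ r ∈ Q, r.Pairwise (· < ·))
    {m m' : List ℤ} (h : CKMove m m') (hred : IsReducedList (rowword Q ++ m)) :
    insertWord Q m = insertWord Q m' := by
  induction Q generalizing m m' with
  | nil =>
    have hm : m ≠ [] := List.ne_nil_of_length_pos (by simp [h.length_eq_three.1])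
    have hm' : m' ≠ [] := List.ne_nil_of_length_pos (by simp [h.length_eq_three.2])
    obtain ⟨hrow, hbump | hbump⟩ := bumpCompatible_insertRowWord List.Pairwise.nil h
      (by simpa [rowword] using hred)
    · rw [insertWord_nil_of_ne_nil hm, insertWord_nil_of_ne_nil hm', insertWord_cons_row,
        insertWord_cons_row, hrow, hbump]
    · -- the first letter inserted into the empty row bumps nothing, leaving too few for a move
      have := length_insertRowWord_nil_snd_lt hm
      have := hbump.length_eq_three.1
      have := h.length_eq_three.1
      omega
  | cons r Q ih =>
    rw [List.forall_mem_cons] at hQ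
    rw [rowword_cons, List.append_assoc] at hred
    obtain ⟨hrow, hbump | hbump⟩ := bumpCompatible_insertRowWord hQ.1 h hred.of_append_right
    · rw [insertWord_cons_row, insertWord_cons_row, hrow, hbump]
    · have hck := (ckEquiv_insertRowWord hQ.1 hred.of_append_right).append_left (rowword Q)
      have hred' := hck.isReducedList_iff.mp hred
      rw [← List.append_assoc] at hred'
      rw [insertWord_cons_row, insertWord_cons_row, hrow, ih hQ.2 hbump hred'.of_append_left]

theorem insertWord_nil_eq_of_ckStep {l l' : List ℤ} (h : CKStep l l') (hred : IsReducedList l) :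
    insertWord [] l = insertWord [] l' := by
  have hred' := (CKEquiv.of_step h).isReducedList_iff.mp hred
  obtain ⟨u, v, m, m', hm, rfl, rfl⟩ := h.exists_ckMove
  have hu := ckEquiv_rowword_insertWord (Q := []) (by simp) (w := u)
    (by simpa using hred.of_append_left.of_append_left)
  have reduced_of {n : List ℤ} (hn : IsReducedList (u ++ n ++ v)) :
      IsReducedList (rowword (insertWord [] u) ++ n) :=
    ((hu.append_right n).isReducedList_iff.mpr (by simpa using hn.of_append_left))
  have hsorted := pairwise_insertWord (Q := []) (by simp) u
  simp only [insertWord_append]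
  rcases hm with hm | hm
  · rw [insertWord_eq_of_ckMove hsorted hm (reduced_of hred)]
  · rw [insertWord_eq_of_ckMove hsorted hm (reduced_of hred')]

theorem insertWord_nil_eq_of_ckEquiv {l l' : List ℤ} (h : CKEquiv l l') (hred : IsReducedList l) :
    insertWord [] l = insertWord [] l' := by
  induction h with
  | rel a b hab => exact insertWord_nil_eq_of_ckStep hab hred
  | refl => rfl
  | symm a b hab ih => exact (ih ((CKEquiv.isReducedList_iff hab).mpr hred)).symm
  | trans a b c hab _ ih ih' =>
    exact (ih hred).trans (ih' ((CKEquiv.isReducedList_iff hab).mp hred))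

theorem insertRowWord_append_of_dominated {xs : List ℤ} (hxs : xs.Pairwise (· < ·))
    {u v : List ℤ} (hu : ∀ z ∈ u, ∀ x ∈ xs, z < x) (hlen : v.length ≤ xs.length)
    (hcol : ∀ j < v.length, xs.getD j 0 < v.getD j 0) :
    insertRowWord (u ++ v) xs = (u ++ xs, v) := by
  induction xs generalizing u v with
  | nil => simp_all
  | cons x xs ih =>
    rw [List.pairwise_cons] at hxs
    have hux : ∀ z ∈ u, z < x := fun z hz => hu z hz x (by simp)
    have hu' : ∀ z ∈ u ++ [x], ∀ y ∈ xs, z < y := by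
      simp only [List.mem_append, List.mem_singleton]
      rintro z (hz | rfl) y hy
      exacts [hu z hz y (by simp [hy]), hxs.1 y hy]
    obtain _ | ⟨v₀, v⟩ := v
    · have := ih hxs.2 hu' (v := []) (Nat.zero_le _) (by simp)
      simp_all [insertRowWord, insertRow_of_forall_lt hux]
    · have hxv : x < v₀ := by simpa using hcol 0 (by simp)
      have := ih hxs.2 hu' (by simpa using hlen) fun j hj => by
        simpa using hcol (j + 1) (by simpa using hj)
      simp_all [insertRowWord, insertRow_append_of_lt hux hxv]

theorem insertWord_row_of_incrTab {r : List ℤ} {Q : List (List ℤ)} (hT : IncrTab (r :: Q)) :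
    insertWord Q r = r :: Q := by
  have hr : r.Pairwise (· < ·) := hT.2.1 r (by simp)
  induction Q generalizing r with
  | nil =>
    rw [insertWord_nil_of_ne_nil (hT.1.1 r (by simp)), insertWord_cons_row,
      show insertRowWord [] r = (r, []) by
        simpa using insertRowWord_append_of_dominated hr (u := []) (v := []) (by simp) (by simp)
          (by simp)]
    rfl
  | cons r₂ Q ih =>
    have hlen : r₂.length ≤ r.length := by simpa using hT.1.2 0 (by simp)
    have hcol : ∀ j < r₂.length, r.getD j 0 < r₂.getD j 0 := fun j hj => by
      simpa [entryOf] using hT.2.2 0 j (by simp) (by simpa using hj)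
    rw [insertWord_cons_row, show insertRowWord r₂ r = (r, r₂) by
      simpa using insertRowWord_append_of_dominated hr (u := []) (by simp) hlen hcol,
      ih (IncrTab.tail hT) (hT.2.1 r₂ (by simp))]

theorem insertWord_rowword {T : List (List ℤ)} (hT : IncrTab T) :
    insertWord [] (rowword T) = T := by
  induction T with
  | nil => rfl
  | cons r Q ih =>
    rw [rowword_cons, insertWord_append, ih (IncrTab.tail hT), insertWord_row_of_incrTab hT]

end EdelmanGreene

theorem IncrTab.eq_of_ckEquiv {T T' : List (List ℤ)} (hT : IncrTab T) (hT' : IncrTab T')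
    (hred : IsReducedList (rowword T)) (h : CKEquiv (rowword T) (rowword T')) : T = T' := by
  rw [← EdelmanGreene.insertWord_rowword hT, ← EdelmanGreene.insertWord_rowword hT',
    EdelmanGreene.insertWord_nil_eq_of_ckEquiv h hred]

theorem succ_le_countP_lt_iff {B : List ℤ} (hB : B.Pairwise (· < ·)) (j : ℕ) (x : ℤ) :
    j + 1 ≤ B.countP (· < x) ↔ j < B.length ∧ B.getD j 0 < x := by
  induction B generalizing j with
  | nil => simp
  | cons b B ih =>
    rw [List.pairwise_cons] at hB
    by_cases hbx : b < x
    · cases j with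
      | zero => simp [hbx]
      | succ k =>
        rw [List.countP_cons, if_pos (by simpa using hbx)]
        simp only [List.length_cons, List.getD_cons_succ, Nat.add_lt_add_iff_right,
          Nat.add_le_add_iff_right]
        exact ih hB.2 k
    · have hzero : B.countP (· < x) = 0 :=
        List.countP_eq_zero.mpr fun z hz => by have := hB.1 z hz; simp; omega
      have hcount : (b :: B).countP (· < x) = 0 := by simp [hbx, hzero]
      rw [hcount]
      refine ⟨fun h => by omega, fun ⟨hj, hlt⟩ => absurd hlt ?_⟩
      cases j with
      | zero => simpa using hbx
      | succ k =>
        have hk : k < B.length := by simpa using hj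
        have := hB.1 _ (List.getElem_mem hk)
        rw [List.getD_cons_succ, List.getD_eq_getElem _ _ hk]
        omega

/-- Row `C` can stand directly below row `B` in an increasing tableau. -/
def ColumnStrict (B C : List ℤ) : Prop :=
  C.length ≤ B.length ∧ ∀ j < C.length, B.getD j 0 < C.getD j 0

/-! ### The pairing procedure -/

/-- Pairs `c` with the largest still unpaired letter below it, if there is one. -/
def pairStep (st : List (ℤ × ℤ) × List ℤ) (c : ℤ) : List (ℤ × ℤ) × List ℤ :=
  match findPairZ c st.2 with
  | (none, r) => (st.1, r)
  | (some b, r) => ((b, c) :: st.1, r)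

theorem pairsZ_eq_foldl (u v : List ℤ) : pairsZ u v = (v.reverse.foldl pairStep ([], u)).1 := rfl

theorem findPairZ_spec (c : ℤ) (L : List ℤ) :
    (findPairZ c L = (none, L) ∧ ∀ b ∈ L, c ≤ b) ∨
    ∃ L₁ b L₂, L = L₁ ++ b :: L₂ ∧ b < c ∧ findPairZ c L = (some b, L₁ ++ L₂) := by
  induction L with
  | nil => simp [findPairZ]
  | cons b₀ L ih =>
    by_cases hb : b₀ < c
    · exact .inr ⟨[], b₀, L, rfl, hb, by simp [findPairZ, hb]⟩
    rcases ih with ⟨hf, hall⟩ | ⟨L₁, b, L₂, rfl, hbc, hf⟩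
    · exact .inl ⟨by simp [findPairZ, hb, hf], List.forall_mem_cons.mpr ⟨not_lt.mp hb, hall⟩⟩
    · exact .inr ⟨b₀ :: L₁, b, L₂, rfl, hbc, by simp [findPairZ, hb, hf]⟩

theorem pairStep_spec (st : List (ℤ × ℤ) × List ℤ) (c : ℤ) :
    (pairStep st c = st ∧ ∀ b ∈ st.2, c ≤ b) ∨
    ∃ L₁ b L₂, st.2 = L₁ ++ b :: L₂ ∧ b < c ∧ pairStep st c = ((b, c) :: st.1, L₁ ++ L₂) := by
  rcases findPairZ_spec c st.2 with ⟨hf, hall⟩ | ⟨L₁, b, L₂, hL, hbc, hf⟩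
  · exact .inl ⟨by simp [pairStep, hf], hall⟩
  · exact .inr ⟨L₁, b, L₂, hL, hbc, by simp [pairStep, hf]⟩

theorem subset_foldl_pairStep (C : List ℤ) (st : List (ℤ × ℤ) × List ℤ) :
    st.1 ⊆ (C.foldl pairStep st).1 := by
  induction C generalizing st with
  | nil => exact List.Subset.refl _
  | cons c C ih =>
    refine List.Subset.trans ?_ (ih _)
    rcases pairStep_spec st c with ⟨h, -⟩ | ⟨L₁, b, L₂, -, -, h⟩ <;> rw [h]
    · exact List.Subset.refl _
    · exact List.subset_cons_self _ _

theorem lt_of_mem_foldl_pairStep (C : List ℤ) (st : List (ℤ × ℤ) × List ℤ) :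
    ∀ pr ∈ (C.foldl pairStep st).1, pr ∈ st.1 ∨ pr.1 < pr.2 := by
  induction C generalizing st with
  | nil => exact fun pr h => .inl h
  | cons c C ih =>
    intro pr hpr
    rw [List.foldl_cons] at hpr
    rcases pairStep_spec st c with ⟨h, -⟩ | ⟨L₁, b, L₂, -, hbc, h⟩ <;> rw [h] at hpr
    · exact ih st pr hpr
    · rcases ih _ pr hpr with hm | hlt
      · rcases List.mem_cons.mp hm with rfl | hm
        exacts [.inr hbc, .inl hm]
      · exact .inr hlt

theorem foldl_pairStep_perm (C : List ℤ) (st : List (ℤ × ℤ) × List ℤ) :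
    ((C.foldl pairStep st).1.map Prod.fst ++ (C.foldl pairStep st).2).Perm
      (st.1.map Prod.fst ++ st.2) := by
  induction C generalizing st with
  | nil => exact .refl _
  | cons c C ih =>
    refine (ih _).trans ?_
    rcases pairStep_spec st c with ⟨h, -⟩ | ⟨L₁, b, L₂, hL, -, h⟩ <;> rw [h]
    rw [hL]
    simpa using (List.perm_middle (a := b) (l₁ := st.1.map Prod.fst ++ L₁) (l₂ := L₂)).symm

theorem mem_foldl_pairStep_snd (C : List ℤ) (st : List (ℤ × ℤ) × List ℤ)
    (hcount : ∀ j < C.length, j + 1 ≤ st.2.countP (· < C.getD j 0)) :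
    ∀ c ∈ C, c ∈ (C.foldl pairStep st).1.map Prod.snd := by
  induction C generalizing st with
  | nil => simp
  | cons c C ih =>
    rcases pairStep_spec st c with ⟨-, hall⟩ | ⟨L₁, b, L₂, hL, -, h⟩
    · have hzero : st.2.countP (· < c) = 0 :=
        List.countP_eq_zero.mpr fun z hz => by simpa using hall z hz
      have := hcount 0 (by simp)
      simp only [List.getD_cons_zero] at this
      omega
    rw [List.foldl_cons, h]
    rintro c' (_ | ⟨_, hc'⟩)
    · exact List.mem_map.mpr ⟨(b, c), subset_foldl_pairStep C _ (by simp), rfl⟩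
    refine ih _ (fun j hj => ?_) c' hc'
    have := hcount (j + 1) (by simpa using hj)
    rw [hL] at this
    simp only [List.getD_cons_succ, List.countP_append, List.countP_cons] at this ⊢
    split at this <;> omega

/-! ### Raising operators on two decreasing factors -/

theorem eStepZ_eq_none_iff (u v : List ℤ) :
    eStepZ u v = none ↔ ∀ c ∈ v, c ∈ (pairsZ u v).map Prod.snd := by
  unfold eStepZ
  rcases h : v.filter (fun c => decide (c ∉ (pairsZ u v).map Prod.snd)) with _ | ⟨x, t⟩
  · refine iff_of_true rfl fun c hc => ?_
    by_contra hn
    have : c ∈ v.filter (fun c => decide (c ∉ (pairsZ u v).map Prod.snd)) :=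
      List.mem_filter.mpr ⟨hc, by simpa using hn⟩
    rw [h] at this
    exact List.not_mem_nil this
  · refine iff_of_false (by simp) fun hall => ?_
    have : x ∈ v.filter (fun c => decide (c ∉ (pairsZ u v).map Prod.snd)) := by
      rw [h]
      exact List.mem_cons_self
    rw [List.mem_filter, decide_eq_true_iff] at this
    exact this.2 (hall x this.1)

theorem paired_of_columnStrict {B C : List ℤ} (hB : B.Pairwise (· < ·)) (h : ColumnStrict B C) :
    ∀ c ∈ C, c ∈ (pairsZ B.reverse C.reverse).map Prod.snd := by
  rw [pairsZ_eq_foldl, List.reverse_reverse]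
  refine mem_foldl_pairStep_snd C _ fun j hj => ?_
  rw [List.countP_reverse, succ_le_countP_lt_iff hB]
  exact ⟨hj.trans_le h.1, h.2 j hj⟩

theorem columnStrict_of_paired {B C : List ℤ} (hB : B.Pairwise (· < ·))
    (hC : C.Pairwise (· < ·)) (h : ∀ c ∈ C, c ∈ (pairsZ B.reverse C.reverse).map Prod.snd) :
    ColumnStrict B C := by
  rw [pairsZ_eq_foldl, List.reverse_reverse] at h
  set P := (C.foldl pairStep ([], B.reverse)).1
  have key : ∀ j < C.length, j < B.length ∧ B.getD j 0 < C.getD j 0 := fun j hj => by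
    set x := C.getD j 0
    rw [← succ_le_countP_lt_iff hB]
    calc j + 1 ≤ C.countP (· < x + 1) := (succ_le_countP_lt_iff hC j (x + 1)).mpr ⟨hj, by omega⟩
      _ ≤ (P.map Prod.snd).countP (· < x + 1) := (List.subperm_of_subset hC.nodup h).countP_le _
      _ ≤ (P.map Prod.fst).countP (· < x) := by
        simp only [List.countP_map]
        refine List.countP_mono_left fun pr hpr hlt => ?_
        have := (lt_of_mem_foldl_pairStep C _ pr hpr).resolve_left (by simp)
        simp only [Function.comp_apply, decide_eq_true_eq] at hlt ⊢
        omega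
      _ ≤ (P.map Prod.fst ++ (C.foldl pairStep ([], B.reverse)).2).countP (· < x) := by
        simp [List.countP_append]
      _ = B.countP (· < x) := by
        rw [(foldl_pairStep_perm C _).countP_eq]
        simp [List.countP_reverse]
  refine ⟨?_, fun j hj => (key j hj).2⟩
  rcases Nat.eq_zero_or_pos C.length with h0 | hpos
  · omega
  · have := (key (C.length - 1) (by omega)).1
    omega

theorem eStepZ_eq_none_iff_columnStrict {u v : List ℤ} (hu : ZDec u) (hv : ZDec v) :
    eStepZ u v = none ↔ ColumnStrict u.reverse v.reverse := by
  have hB : u.reverse.Pairwise (· < ·) := List.pairwise_reverse.mpr hu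
  have hC : v.reverse.Pairwise (· < ·) := List.pairwise_reverse.mpr hv
  rw [eStepZ_eq_none_iff]
  constructor
  · intro h
    exact columnStrict_of_paired hB hC (by simpa using h)
  · intro h c hc
    simpa using paired_of_columnStrict hB h c (List.mem_reverse.mpr hc)

theorem eZ_eq_none_iff {i : ℕ} {a : ℕ → List ℤ} : eZ i a = none ↔ eStepZ (a i) (a (i + 1)) = none :=
  Option.map_eq_none_iff

theorem IncrTab.columnStrict {T : List (List ℤ)} (hT : IncrTab T) (i : ℕ) :
    ColumnStrict (T.getD i []) (T.getD (i + 1) []) := by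
  by_cases hi : i + 1 < T.length
  · exact ⟨hT.1.2 i hi, fun j hj => hT.2.2 i j hi hj⟩
  · rw [List.getD_eq_default _ _ (not_lt.mp hi)]
    simp [ColumnStrict]

theorem incrTab_of_columnStrict {T : List (List ℤ)} (hne : ∀ r ∈ T, r ≠ [])
    (hsorted : ∀ r ∈ T, r.Pairwise (· < ·))
    (hcol : ∀ i, i + 1 < T.length → ColumnStrict (T.getD i []) (T.getD (i + 1) [])) :
    IncrTab T :=
  ⟨⟨hne, fun i hi => (hcol i hi).1⟩, hsorted, fun i j hi hj => (hcol i hi).2 j hj⟩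

theorem pairwise_getD {R : ℤ → ℤ → Prop} {T : List (List ℤ)} (hT : ∀ r ∈ T, r.Pairwise R)
    (m : ℕ) : (T.getD m []).Pairwise R := by
  by_cases hm : m < T.length
  · rw [List.getD_eq_getElem _ _ hm]
    exact hT _ (List.getElem_mem hm)
  · rw [List.getD_eq_default _ _ (not_lt.mp hm)]
    exact .nil

def rowFactorization (T : List (List ℤ)) : ℕ → List ℤ := fun m => (T.getD m []).reverse

def factorTableau (a : ℕ → List ℤ) (k : ℕ) : List (List ℤ) :=
  (List.range k).map fun m => (a m).reverse

theorem concatZ_succ (a : ℕ → List ℤ) (n : ℕ) :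
    concatZ a (n + 1) = a 0 ++ concatZ (fun m => a (m + 1)) n := by
  simp [concatZ, List.range_succ_eq_map, Function.comp_def]

theorem concatZ_rowFactorization {T : List (List ℤ)} {n : ℕ} (hn : T.length ≤ n) :
    concatZ (rowFactorization T) n = revrow T := by
  induction T generalizing n with
  | nil => simp [concatZ, rowFactorization, revrow, rowword]
  | cons r Q ih =>
    cases n with
    | zero => simp at hn
    | succ n => ?_
    have ih' : concatZ (fun m => (Q.getD m []).reverse) n = revrow Q := ih (by simpa using hn)
    rw [concatZ_succ]
    simp only [rowFactorization, List.getD_cons_zero, List.getD_cons_succ, ih']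
    simp [revrow, rowword_cons]

theorem rowFactorization_factorTableau {a : ℕ → List ℤ} {k : ℕ} (hk : ∀ m, k ≤ m → a m = []) :
    rowFactorization (factorTableau a k) = a := by
  funext m
  by_cases hm : m < k
  · simp [rowFactorization, factorTableau, hm]
  · simp [rowFactorization, factorTableau, hm, hk m (not_lt.mp hm)]

theorem exists_incrTab_of_highestWeight {n : ℕ} {a : ℕ → List ℤ} (hdec : ∀ i, ZDec (a i))
    (hempty : ∀ m, n ≤ m → a m = []) (he : ∀ i, i + 1 < n → eZ i a = none) :
    ∃ T, IncrTab T ∧ T.length ≤ n ∧ rowFactorization T = a := by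
  have hcol i (hi : i + 1 < n) : ColumnStrict (a i).reverse (a (i + 1)).reverse :=
    (eStepZ_eq_none_iff_columnStrict (hdec i) (hdec (i + 1))).mp (eZ_eq_none_iff.mp (he i hi))
  have hex : ∃ m, a m = [] := ⟨n, hempty n le_rfl⟩
  have hkn : Nat.find hex ≤ n := Nat.find_min' hex (hempty n le_rfl)
  have hk : ∀ m, Nat.find hex ≤ m → a m = [] := fun m hm => by
    induction m, hm using Nat.le_induction with
    | base => exact Nat.find_spec hex
    | succ m _ ih =>
      by_cases hmn : m + 1 < n
      · simpa [ih] using (hcol m hmn).1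
      · exact hempty _ (by omega)
  have hrows : ∀ m < Nat.find hex, (factorTableau a (Nat.find hex)).getD m [] = (a m).reverse :=
    fun m hm => by simp [factorTableau, hm]
  refine ⟨_, incrTab_of_columnStrict ?_ ?_ fun i hi => ?_, by simpa [factorTableau] using hkn,
    rowFactorization_factorTableau hk⟩
  · simp only [factorTableau, List.mem_map, List.mem_range]
    rintro _ ⟨m, hm, rfl⟩
    simpa using Nat.find_min hex hm
  · simp only [factorTableau, List.mem_map]
    rintro _ ⟨m, -, rfl⟩
    exact List.pairwise_reverse.mpr (hdec m)
  · simp only [factorTableau, List.length_map, List.length_range] at hi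
    rw [hrows i (by omega), hrows (i + 1) hi]
    exact hcol i (by omega)

theorem rowFactorization_mem_RFZnTincr {n : ℕ} {w : Equiv.Perm ℤ} {T : List (List ℤ)}
    (hT : IncrTab T) (hrows : T.length ≤ n) (hred : IsReducedWord w (revrow T)) :
    rowFactorization T ∈ RFZnTincr n w T := by
  refine ⟨⟨fun i => ?_, fun m hm => ?_, ?_⟩, ?_⟩
  · exact List.pairwise_reverse.mpr (pairwise_getD hT.2.1 i)
  · simp only [rowFactorization, List.getD_eq_default _ _ (hrows.trans hm), List.reverse_nil]
  · rwa [concatZ_rowFactorization hrows]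
  · rw [concatZ_rowFactorization hrows]
    exact .refl _

theorem eZ_rowFactorization_eq_none {T : List (List ℤ)} (hT : IncrTab T) (i : ℕ) :
    eZ i (rowFactorization T) = none := by
  rw [eZ_eq_none_iff, eStepZ_eq_none_iff_columnStrict] <;>
    simp only [rowFactorization, List.reverse_reverse, ZDec, List.pairwise_reverse]
  exacts [hT.columnStrict i, pairwise_getD hT.2.1 i, pairwise_getD hT.2.1 (i + 1)]

theorem highest_weight_of_RFnT_general (n : ℕ) (w : Equiv.Perm ℤ)
    (T : List (List ℤ)) (hT : IncrTab T) (hrows : T.length ≤ n)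
    (hred : IsReducedWord w (revrow T)) :
    (fun m => (T.getD m []).reverse) ∈ RFZnTincr n w T ∧
    (∀ i : ℕ, i + 1 < n → eZ i (fun m => (T.getD m []).reverse) = none) ∧
    (∀ a ∈ RFZnTincr n w T, (∀ i : ℕ, i + 1 < n → eZ i a = none) →
      a = fun m => (T.getD m []).reverse) := by
  refine ⟨rowFactorization_mem_RFZnTincr hT hrows hred,
    fun i _ => eZ_rowFactorization_eq_none hT i, ?_⟩
  rintro a ⟨⟨hdec, hempty, hreda⟩, hck⟩ he
  obtain ⟨T', hT', hlen, rfl⟩ := exists_incrTab_of_highestWeight hdec hempty he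
  rw [concatZ_rowFactorization hlen] at hreda hck
  have hrow : CKEquiv (rowword T') (rowword T) := by simpa [revrow] using hck.reverse
  have hredT' : IsReducedList (rowword T') := by
    simpa [revrow] using (IsReducedWord.isReducedList hreda).reverse
  rw [hT'.eq_of_ckEquiv hT hredT' hrow]
  rfl

/-- For an increasing tableau `T` with at most `n` rows and
`revrow(T) ∈ R(w)`, the factorization whose `i`-th factor is the reversal of row `i` of `T`
belongs to `RF_n(T)` and is its unique element killed by all raising operators `e_i`,
`i ∈ {1, …, n-1}`. -/
theorem highest_weight_of_RFnT (n : ℕ) (hn : 0 < n) (w : Equiv.Perm ℤ) (hw : w ∈ SZSet)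
    (T : List (List ℤ)) (hT : IncrTab T) (hrows : T.length ≤ n)
    (hred : IsReducedWord w (revrow T)) :
    (fun m => (T.getD m []).reverse) ∈ RFZnTincr n w T ∧
    (∀ i : ℕ, i + 1 < n → eZ i (fun m => (T.getD m []).reverse) = none) ∧
    (∀ a ∈ RFZnTincr n w T, (∀ i : ℕ, i + 1 < n → eZ i a = none) →
      a = fun m => (T.getD m []).reverse) :=
  highest_weight_of_RFnT_general n w T hT hrows hred
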